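/- arXiv:2407.01441 — 7 statements merged into one kernel-verified Lean document; each statement's English description precedes it below -/
import Mathlib

section
/- The number of sequences 0 ≤ s₁ ≤ s₂ ≤ ⋯ ≤ sₙ ≤ n−1 of integers summing to C(n,2), with all partial sums ∑_{i=1}^k sᵢ ≥ C(k,2), equals the number of score sequences of tournaments on n vertices (i.e., sequences realizable as out-degree sequences of a tournament on n labeled vertices, sorted in nondecreasing order). -/
/-- The partial sum `s₁ + ⋯ + s_k`. -/
def scorePartial (n : ℕ) (s : Fin n → ℕ) (k : ℕ) : ℕ :=
  ∑ i ∈ Finset.univ.filter (fun i : Fin n => (i : ℕ) < k), s i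

/-- Landau-type conditions: nondecreasing, `0 ≤ sᵢ ≤ n−1`, sum `C(n,2)`,
partial sums `≥ C(k,2)`. -/
def IsScoreSeq (n : ℕ) (s : Fin n → ℕ) : Prop :=
  Monotone s ∧ (∀ i, s i ≤ n - 1) ∧ (∑ i, s i) = n.choose 2 ∧
    ∀ k ≤ n, Nat.choose k 2 ≤ scorePartial n s k

/-- A tournament on `n` labeled vertices: an orientation of `Kₙ`, given by `r`
with no loops and exactly one direction between distinct vertices. -/
def IsTournament (n : ℕ) (r : Fin n → Fin n → Bool) : Prop :=
  (∀ i, r i i = false) ∧ ∀ i j, i ≠ j → r i j = !r j i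

/-- `s` is the score sequence of the tournament `r`: the nondecreasing
rearrangement of the out-degrees. -/
def IsSortedOutDegrees (n : ℕ) (r : Fin n → Fin n → Bool) (s : Fin n → ℕ) : Prop :=
  Monotone s ∧ ∃ σ : Equiv.Perm (Fin n),
    ∀ i, s i = (Finset.univ.filter (fun j => r (σ i) j = true)).card

open Finset
set_option maxHeartbeats 1000000

open Finset

def outDeg (n : ℕ) (r : Fin n → Fin n → Bool) (i : Fin n) : ℕ :=
  (Finset.univ.filter (fun j => r i j = true)).card

lemma two_mul_choose_two (k : ℕ) : 2 * k.choose 2 = k * (k - 1) := by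
  induction k with
  | zero => rfl
  | succ m ih =>
    rw [Nat.choose_succ_succ' m 1, Nat.choose_one_right, Nat.mul_add, ih]
    cases m with
    | zero => rfl
    | succ l =>
      simp only [Nat.add_sub_cancel]
      ring

lemma tournament_count (n : ℕ) (r : Fin n → Fin n → Bool) (hr : IsTournament n r)
    (B : Finset (Fin n)) :
    ∑ i ∈ B, (B.filter (fun j => r i j = true)).card = (B.card).choose 2 := by
  obtain ⟨h1, h2⟩ := hr
  have key : ∀ p : Fin n × Fin n, r p.1 p.2 = true → p.1 ≠ p.2 := by
    intro p hp hne; rw [hne] at hp; rw [h1] at hp; exact Bool.noConfusion hp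
  set X := (B ×ˢ B).filter (fun p => r p.1 p.2 = true) with hX
  have hsum : ∑ i ∈ B, (B.filter (fun j => r i j = true)).card = X.card := by
    rw [hX, card_filter, Finset.sum_product]
    refine Finset.sum_congr rfl fun i _ => ?_
    rw [card_filter]
  have hXo : X = B.offDiag.filter (fun p => r p.1 p.2 = true) := by
    ext p
    simp only [hX, mem_filter, mem_product, mem_offDiag]
    constructor
    · rintro ⟨⟨hp1, hp2⟩, hp⟩; exact ⟨⟨hp1, hp2, key p hp⟩, hp⟩
    · rintro ⟨⟨hp1, hp2, _⟩, hp⟩; exact ⟨⟨hp1, hp2⟩, hp⟩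
  set Y := B.offDiag.filter (fun p => ¬ (r p.1 p.2 = true)) with hY
  have hcards : X.card + Y.card = B.offDiag.card := by
    rw [hXo, hY]; exact card_filter_add_card_filter_not _
  have hXY : X.card = Y.card := by
    apply Finset.card_nbij' (fun p => p.swap) (fun p => p.swap)
    · intro p hp
      rw [hX, mem_coe, mem_filter, mem_product] at hp
      obtain ⟨⟨hp1, hp2⟩, hp⟩ := hp
      rw [hY, mem_coe, mem_filter, mem_offDiag]
      have hne := key p hp
      refine ⟨⟨hp2, hp1, fun h => hne h.symm⟩, ?_⟩
      simp only [Prod.fst_swap, Prod.snd_swap]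
      rw [h2 p.2 p.1 (fun h => hne h.symm), hp]
      simp
    · intro p hp
      rw [hY, mem_coe, mem_filter, mem_offDiag] at hp
      obtain ⟨⟨hp1, hp2, hne⟩, hp⟩ := hp
      rw [hX, mem_coe, mem_filter, mem_product]
      refine ⟨⟨hp2, hp1⟩, ?_⟩
      simp only [Prod.fst_swap, Prod.snd_swap]
      have hthis := h2 p.1 p.2 hne
      cases hb : r p.2 p.1 with
      | false => exfalso; rw [hb] at hthis; simp at hthis; exact hp hthis
      | true => rfl
    · intro p _; exact Prod.swap_swap p
    · intro p _; exact Prod.swap_swap p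
  have hod : B.offDiag.card = B.card * B.card - B.card := Finset.offDiag_card B
  have h2c : 2 * (B.card).choose 2 = B.card * (B.card - 1) := two_mul_choose_two _
  have hmm : B.card * (B.card - 1) = B.card * B.card - B.card * 1 := Nat.mul_sub _ _ _
  rw [hsum, hXY]
  omega

lemma outDeg_le (n : ℕ) (r : Fin n → Fin n → Bool) (hr : IsTournament n r) (i : Fin n) :
    outDeg n r i ≤ n - 1 := by
  have h : (Finset.univ.filter (fun j => r i j = true)) ⊆ Finset.univ.erase i := by
    intro j hj
    rw [mem_filter] at hj
    rw [mem_erase]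
    refine ⟨fun h => ?_, mem_univ _⟩
    rw [h, hr.1 i] at hj; exact Bool.noConfusion hj.2
  have := Finset.card_le_card h
  rwa [Finset.card_erase_of_mem (mem_univ i), Finset.card_univ, Fintype.card_fin] at this
open Finset

def extSeq (n : ℕ) (s : Fin (n+1) → ℕ) : ℕ → ℕ :=
  fun m => s ⟨min m n, Nat.lt_succ_of_le (min_le_right m n)⟩

lemma extSeq_apply (n : ℕ) (s : Fin (n+1) → ℕ) (i : Fin (n+1)) :
    extSeq n s (i : ℕ) = s i := by
  unfold extSeq
  congr 1
  exact Fin.ext (by simp [Nat.lt_succ_iff.mp i.isLt])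

lemma extSeq_mono (n : ℕ) (s : Fin (n+1) → ℕ) (hm : Monotone s) :
    Monotone (extSeq n s) := by
  intro x y hxy
  exact hm (by simp [Fin.le_def]; omega)

lemma extSeq_le (n : ℕ) (s : Fin (n+1) → ℕ) (hm : Monotone s) (m : ℕ) :
    extSeq n s m ≤ s (Fin.last n) := by
  apply hm
  simp [Fin.le_def]

lemma card_filter_lt (N k : ℕ) (hk : k ≤ N) :
    ((univ : Finset (Fin N)).filter fun i : Fin N => (i:ℕ) < k).card = k := by
  rcases Nat.eq_zero_or_pos N with h | h
  · subst h
    interval_cases k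
    simp
  · have heq : ((univ : Finset (Fin N)).filter fun i : Fin N => (i:ℕ) < k).card = (range k).card := by
      apply Finset.card_nbij' (fun i : Fin N => (i:ℕ)) (fun m => ⟨m % N, Nat.mod_lt m h⟩)
      · intro a ha; rw [mem_coe, mem_filter] at ha; exact mem_range.mpr ha.2
      · intro b hb
        rw [mem_coe, mem_range] at hb
        rw [mem_coe, mem_filter]
        have : b % N = b := Nat.mod_eq_of_lt (lt_of_lt_of_le hb hk)
        exact ⟨mem_univ _, by simpa [this]⟩
      · intro a ha; exact Fin.ext (Nat.mod_eq_of_lt a.isLt)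
      · intro b hb
        rw [mem_coe, mem_range] at hb
        exact Nat.mod_eq_of_lt (lt_of_lt_of_le hb hk)
    rw [heq, card_range]

lemma sum_filter_lt (n k : ℕ) (s : Fin (n+1) → ℕ) (hk : k ≤ n+1) :
    ∑ i ∈ (univ : Finset (Fin (n+1))).filter (fun i : Fin (n+1) => (i:ℕ) < k), s i
      = ∑ j ∈ range k, extSeq n s j := by
  apply Finset.sum_nbij' (fun i : Fin (n+1) => (i:ℕ))
    (fun m => (⟨min m n, Nat.lt_succ_of_le (min_le_right m n)⟩ : Fin (n+1)))
  · intro a ha; rw [mem_filter] at ha; exact mem_range.mpr ha.2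
  · intro b hb
    rw [mem_range] at hb
    rw [mem_filter]
    refine ⟨mem_univ _, ?_⟩
    simp only
    omega
  · intro a _
    exact Fin.ext (by simp [Nat.lt_succ_iff.mp a.isLt])
  · intro b hb
    rw [mem_range] at hb
    simp only
    omega
  · intro a _
    rw [← extSeq_apply n s a]

lemma sum_orderEmb (N : ℕ) (A : Finset (Fin N)) (f : Fin N → ℕ) :
    ∑ j : Fin A.card, f (A.orderEmbOfFin rfl j) = ∑ x ∈ A, f x := by
  rw [← Finset.sum_coe_sort A f]
  rw [← Equiv.sum_comp (A.orderIsoOfFin rfl).toEquiv (fun x : {x // x ∈ A} => f x)]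
  rfl

lemma orderEmb_lb (N : ℕ) (A : Finset (Fin N)) (b : ℕ) (hb : ∀ i ∈ A, b ≤ (i:ℕ)) :
    ∀ m (h : m < A.card), b + m ≤ ((A.orderEmbOfFin rfl) ⟨m, h⟩ : ℕ) := by
  intro m
  induction m with
  | zero =>
    intro h
    simpa using hb _ (Finset.orderEmbOfFin_mem A rfl ⟨0, h⟩)
  | succ l ih =>
    intro h
    have h1 : l < A.card := by omega
    have hle := ih h1
    have hlt : (A.orderEmbOfFin rfl) ⟨l, h1⟩ < (A.orderEmbOfFin rfl) ⟨l+1, h⟩ := by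
      apply (A.orderEmbOfFin rfl).strictMono
      exact Fin.mk_lt_mk.mpr (by omega)
    rw [Fin.lt_def] at hlt
    omega

lemma sortedSum (n : ℕ) (s : Fin (n+1) → ℕ) (hm : Monotone s) (A : Finset (Fin (n+1)))
    (b : ℕ) (hb : ∀ i ∈ A, b ≤ (i:ℕ)) :
    ∑ j ∈ range A.card, extSeq n s (b + j) ≤ ∑ i ∈ A, s i := by
  rw [← sum_orderEmb (n+1) A s, ← Fin.sum_univ_eq_sum_range (fun j => extSeq n s (b + j)) A.card]
  apply Finset.sum_le_sum
  intro j _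
  have hbd := orderEmb_lb (n+1) A b hb j j.isLt
  calc extSeq n s (b + (j:ℕ)) ≤ extSeq n s ((A.orderEmbOfFin rfl) ⟨(j:ℕ), j.isLt⟩ : ℕ) :=
        extSeq_mono n s hm hbd
    _ = s ((A.orderEmbOfFin rfl) j) := by rw [extSeq_apply]
open Finset

def Pfx (n : ℕ) (s : Fin (n+1) → ℕ) (k : ℕ) : ℕ := ∑ j ∈ range k, extSeq n s j

lemma choose_two_sq (u : ℕ) : 2 * u.choose 2 + u = u * u := by
  have h := two_mul_choose_two u
  cases u with
  | zero => simp
  | succ v => rw [h, Nat.add_sub_cancel]; ring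

lemma Pfx_ge (n : ℕ) (s : Fin (n+1) → ℕ)
    (hL : ∀ A : Finset (Fin (n+1)), (A.card).choose 2 ≤ ∑ i ∈ A, s i)
    (k : ℕ) (hk : k ≤ n+1) : k.choose 2 ≤ Pfx n s k := by
  have h1 := hL ((univ : Finset (Fin (n+1))).filter (fun i : Fin (n+1) => (i:ℕ) < k))
  rwa [card_filter_lt (n+1) k hk, sum_filter_lt n k s hk] at h1

lemma Pfx_total (n : ℕ) (s : Fin (n+1) → ℕ) (hsum : ∑ i, s i = (n+1).choose 2) :
    Pfx n s (n+1) = (n+1).choose 2 := by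
  unfold Pfx
  rw [← Fin.sum_univ_eq_sum_range (fun j => extSeq n s j) (n+1), ← hsum]
  exact Finset.sum_congr rfl (fun i _ => extSeq_apply n s i)

lemma Pfx_add (n : ℕ) (s : Fin (n+1) → ℕ) (x y : ℕ) :
    Pfx n s (x + y) = Pfx n s x + ∑ j ∈ range y, extSeq n s (x + j) := by
  induction y with
  | zero => simp [Pfx]
  | succ m ih =>
    rw [show x + (m+1) = (x + m) + 1 from rfl]
    unfold Pfx at *
    rw [Finset.sum_range_succ, ih, Finset.sum_range_succ]
    omega

lemma dprime_landau (n : ℕ) (s : Fin (n+1) → ℕ) (hm : Monotone s)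
    (hL : ∀ A : Finset (Fin (n+1)), (A.card).choose 2 ≤ ∑ i ∈ A, s i)
    (hsum : ∑ i, s i = (n+1).choose 2) (ha : s (Fin.last n) ≤ n)
    (A : Finset (Fin n)) :
    (A.card).choose 2 + (A.filter (fun i : Fin n => s (Fin.last n) ≤ (i:ℕ))).card
      ≤ ∑ i ∈ A, s i.castSucc := by
  set a := s (Fin.last n) with haa
  set t := (A.filter (fun i : Fin n => a ≤ (i:ℕ))).card with ht
  set p := (A.filter (fun i : Fin n => ¬ a ≤ (i:ℕ))).card with hp
  have hcard : t + p = A.card := card_filter_add_card_filter_not _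
  have hsplit : ∑ i ∈ A, s i.castSucc
      = ∑ i ∈ A.filter (fun i : Fin n => ¬ a ≤ (i:ℕ)), s i.castSucc
        + ∑ i ∈ A.filter (fun i : Fin n => a ≤ (i:ℕ)), s i.castSucc := by
    rw [add_comm]
    exact (Finset.sum_filter_add_sum_filter_not A (fun i : Fin n => a ≤ (i:ℕ)) _).symm
  have hlow : Pfx n s p ≤ ∑ i ∈ A.filter (fun i : Fin n => ¬ a ≤ (i:ℕ)), s i.castSucc := by
    have h := sortedSum n s hm
      ((A.filter (fun i : Fin n => ¬ a ≤ (i:ℕ))).map Fin.castSuccEmb) 0 (fun i _ => Nat.zero_le _)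
    rw [Finset.card_map, Finset.sum_map] at h
    show ∑ j ∈ range p, extSeq n s j ≤ _
    simpa only [Nat.zero_add, Fin.coe_castSuccEmb, ← hp] using h
  have hhigh : ∑ j ∈ range t, extSeq n s (a + j)
      ≤ ∑ i ∈ A.filter (fun i : Fin n => a ≤ (i:ℕ)), s i.castSucc := by
    have h := sortedSum n s hm
      ((A.filter (fun i : Fin n => a ≤ (i:ℕ))).map Fin.castSuccEmb) a ?_
    · rw [Finset.card_map, Finset.sum_map] at h
      exact h
    · intro i hi
      rw [Finset.mem_map] at hi
      obtain ⟨x, hx, rfl⟩ := hi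
      rw [mem_filter] at hx
      exact hx.2
  have hpa : p ≤ a := by
    have hsub : (A.filter (fun i : Fin n => ¬ a ≤ (i:ℕ)))
        ⊆ (univ : Finset (Fin n)).filter (fun i : Fin n => (i:ℕ) < a) := by
      intro i hi
      rw [mem_filter] at hi ⊢
      exact ⟨mem_univ _, by omega⟩
    calc p ≤ _ := Finset.card_le_card hsub
      _ = a := card_filter_lt n a ha
  have hta : t + a ≤ n := by
    rcases Nat.eq_zero_or_pos t with h0 | h1
    · omega
    · have hsub : (A.filter (fun i : Fin n => a ≤ (i:ℕ)))
          ⊆ (univ : Finset (Fin n)).filter (fun i : Fin n => ¬ (i:ℕ) < a) := by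
        intro i hi
        rw [mem_filter] at hi ⊢
        exact ⟨mem_univ _, by omega⟩
      have h2 := Finset.card_le_card hsub
      have h3 : ((univ : Finset (Fin n)).filter (fun i : Fin n => (i:ℕ) < a)).card
          + ((univ : Finset (Fin n)).filter (fun i : Fin n => ¬ (i:ℕ) < a)).card = n := by
        rw [card_filter_add_card_filter_not]
        simp
      rw [card_filter_lt n a ha] at h3
      omega
  set T := ∑ j ∈ range t, extSeq n s (a + j) with hT
  have hPat : Pfx n s (a + t) = Pfx n s a + T := Pfx_add n s a t
  have hSa : ∀ j, extSeq n s j ≤ a := fun j => extSeq_le n s hm j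
  have hF4 : t * extSeq n s a ≤ T := by
    rw [hT]
    calc t * extSeq n s a = ∑ _j ∈ range t, extSeq n s a := by
          rw [Finset.sum_const, card_range, smul_eq_mul, mul_comm]
      _ ≤ _ := Finset.sum_le_sum (fun j _ => extSeq_mono n s hm (by omega))
  have hF3 : Pfx n s a ≤ Pfx n s p + (a - p) * extSeq n s a := by
    have h := Pfx_add n s p (a - p)
    rw [Nat.add_sub_cancel' hpa] at h
    rw [h]
    have h2 : ∑ j ∈ range (a - p), extSeq n s (p + j) ≤ (a - p) * extSeq n s a := by
      calc ∑ j ∈ range (a - p), extSeq n s (p + j)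
          ≤ ∑ _j ∈ range (a - p), extSeq n s a :=
            Finset.sum_le_sum (fun j hj => extSeq_mono n s hm (by rw [mem_range] at hj; omega))
        _ = (a - p) * extSeq n s a := by rw [Finset.sum_const, card_range, smul_eq_mul]
    omega
  have hPp : p.choose 2 ≤ Pfx n s p := Pfx_ge n s hL p (by omega)
  have hF2 : 1 ≤ t → (a + t).choose 2 + t ≤ Pfx n s (a + t) := by
    intro h1
    have htot := Pfx_total n s hsum
    have hup : Pfx n s (n+1) ≤ Pfx n s (a + t) + (n + 1 - (a + t)) * a := by
      have heq := Pfx_add n s (a + t) (n + 1 - (a + t))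
      rw [Nat.add_sub_cancel' (by omega : a + t ≤ n + 1)] at heq
      rw [heq]
      have h2 : ∑ j ∈ range (n + 1 - (a + t)), extSeq n s (a + t + j)
          ≤ (n + 1 - (a + t)) * a := by
        calc ∑ j ∈ range (n + 1 - (a + t)), extSeq n s (a + t + j)
            ≤ ∑ _j ∈ range (n + 1 - (a + t)), a := Finset.sum_le_sum (fun j _ => hSa _)
          _ = _ := by rw [Finset.sum_const, card_range, smul_eq_mul]
      omega
    have harith : (a + t).choose 2 + t + (n + 1 - (a + t)) * a ≤ (n+1).choose 2 := by
      obtain ⟨m, hmeq⟩ : ∃ m, n = a + t + m := ⟨n - (a + t), by omega⟩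
      have hm1 : n + 1 - (a + t) = m + 1 := by omega
      rw [hm1]
      have c1 := choose_two_sq (a + t)
      have c2 := choose_two_sq (n + 1)
      nlinarith [c1, c2, hmeq]
    omega
  rw [hsplit, ← hcard]
  rcases Nat.eq_zero_or_pos t with h0 | h1
  · have heq : (t + p).choose 2 = p.choose 2 := by rw [h0, Nat.zero_add]
    have h2 : p.choose 2 ≤ ∑ i ∈ A.filter (fun i : Fin n => ¬ a ≤ (i:ℕ)), s i.castSucc :=
      le_trans hPp hlow
    omega
  · have hgoal : (t + p).choose 2 + t ≤ Pfx n s p + T := by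
      have q1 := choose_two_sq (t + p)
      rcases le_or_gt (2 * p + t + 1) (2 * extSeq n s a) with hc | hc
      · have q2 := choose_two_sq p
        have hint : (2 * p + t + 1) * t ≤ (2 * extSeq n s a) * t :=
          Nat.mul_le_mul_right t hc
        nlinarith [q1, q2, hint, hPp, hF4]
      · have hF2' := hF2 h1
        rw [hPat] at hF2'
        have q2 := choose_two_sq (a + t)
        obtain ⟨q, hqeq⟩ : ∃ q, a = p + q := ⟨a - p, by omega⟩
        have hint : (2 * extSeq n s a) * q ≤ (2 * p + t) * q :=
          Nat.mul_le_mul_right q (by omega)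
        have hsub : a - p = q := by omega
        rw [hsub] at hF3
        have hq1 : 1 * q ≤ t * q := Nat.mul_le_mul_right q h1
        have q3 : (a + t) * (a + t) = (p + q + t) * (p + q + t) := by rw [hqeq]
        linarith [q1, q2, q3, hint, hF3, hF2', hq1, hqeq, Nat.zero_le (q * q)]
    calc (t + p).choose 2 + t ≤ Pfx n s p + T := hgoal
      _ ≤ _ := by exact Nat.add_le_add hlow hhigh
lemma score_pos (n : ℕ) (s : Fin (n+1) → ℕ) (hm : Monotone s)
    (hL : ∀ A : Finset (Fin (n+1)), (A.card).choose 2 ≤ ∑ i ∈ A, s i)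
    (hsum : ∑ i, s i = (n+1).choose 2)
    (i : Fin n) (hi : s (Fin.last n) ≤ (i:ℕ)) : 1 ≤ s i.castSucc := by
  by_contra hcon
  push_neg at hcon
  have h0 : s i.castSucc = 0 := by omega
  have hP := Pfx_ge n s hL ((i:ℕ) + 1) (by omega)
  have hz : Pfx n s ((i:ℕ)+1) = 0 := by
    apply Finset.sum_eq_zero
    intro j hj
    rw [Finset.mem_range] at hj
    have h1 : extSeq n s j ≤ extSeq n s ((i.castSucc : ℕ)) := by
      apply extSeq_mono n s hm
      simp only [Fin.coe_castSucc]
      omega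
    rw [extSeq_apply, h0] at h1
    omega
  rw [hz] at hP
  have hi1 : (i:ℕ) = 0 := by
    by_contra hh
    have : 1 ≤ ((i:ℕ) + 1).choose 2 := Nat.choose_pos (by omega)
    omega
  have ha0 : s (Fin.last n) = 0 := by omega
  have htot0 : ∑ j : Fin (n+1), s j = 0 := by
    apply Finset.sum_eq_zero
    intro j _
    have := hm (Fin.le_last j)
    omega
  rw [hsum] at htot0
  have : 1 ≤ (n+1).choose 2 := Nat.choose_pos (by have := i.isLt; omega)
  omega

lemma exists_tournament : ∀ (n : ℕ) (d : Fin n → ℕ),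
    (∀ A : Finset (Fin n), (A.card).choose 2 ≤ ∑ i ∈ A, d i) →
    (∑ i, d i = n.choose 2) →
    ∃ r : Fin n → Fin n → Bool, IsTournament n r ∧ ∀ i, outDeg n r i = d i := by
  intro n
  induction n with
  | zero =>
    intro d _ _
    exact ⟨fun _ _ => false, ⟨fun i => rfl, fun i _ _ => i.elim0⟩, fun i => i.elim0⟩
  | succ m ih =>
    intro d hL hsum
    set τ := Tuple.sort d with hτ
    set s : Fin (m+1) → ℕ := d ∘ τ with hs
    have hmono : Monotone s := Tuple.monotone_sort d
    have hLs : ∀ A : Finset (Fin (m+1)), (A.card).choose 2 ≤ ∑ i ∈ A, s i := by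
      intro A
      have himg : ∑ i ∈ A, s i = ∑ j ∈ A.image τ, d j := by
        rw [Finset.sum_image (fun x _ y _ h => τ.injective h)]
        rfl
      have hcard : (A.image τ).card = A.card :=
        Finset.card_image_of_injective A τ.injective
      rw [himg, ← hcard]
      exact hL _
    have hsums : ∑ i, s i = (m+1).choose 2 := by
      rw [hs]
      calc ∑ i, d (τ i) = ∑ i, d i := Equiv.sum_comp τ d
        _ = (m+1).choose 2 := hsum
    set a := s (Fin.last m) with haa
    have hchoose : (m+1).choose 2 = m.choose 2 + m := by
      rw [Nat.choose_succ_succ' m 1]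
      show m.choose 1 + m.choose 2 = m.choose 2 + m
      rw [Nat.choose_one_right]
      omega
    have ha : a ≤ m := by
      have h1 := hLs (Finset.univ.erase (Fin.last m))
      rw [Finset.card_erase_of_mem (Finset.mem_univ _), Finset.card_univ,
        Fintype.card_fin] at h1
      have h2 : ∑ i ∈ Finset.univ.erase (Fin.last m), s i + a
          = ∑ i, s i := by
        rw [haa]
        exact Finset.sum_erase_add _ _ (Finset.mem_univ _)
      simp only [Nat.add_sub_cancel] at h1
      rw [hsums] at h2
      omega
    have hpos : ∀ i : Fin m, a ≤ (i:ℕ) → 1 ≤ s i.castSucc :=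
      fun i hi => score_pos m s hmono hLs hsums i hi
    set d' : Fin m → ℕ := fun i => s i.castSucc - (if a ≤ (i:ℕ) then 1 else 0) with hd'def
    have hsum_d' : ∀ A : Finset (Fin m),
        ∑ i ∈ A, d' i + (A.filter (fun i : Fin m => a ≤ (i:ℕ))).card
          = ∑ i ∈ A, s i.castSucc := by
      intro A
      rw [Finset.card_filter, ← Finset.sum_add_distrib]
      apply Finset.sum_congr rfl
      intro i _
      rw [hd'def]
      by_cases hcase : a ≤ (i:ℕ)
      · have := hpos i hcase
        simp only [hcase, if_true]
        omega
      · simp only [hcase, if_false]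
        omega
    have hd'L : ∀ A : Finset (Fin m), (A.card).choose 2 ≤ ∑ i ∈ A, d' i := by
      intro A
      have h := dprime_landau m s hmono hLs hsums ha A
      rw [← haa] at h
      have h2 := hsum_d' A
      omega
    have hd'sum : ∑ i, d' i = m.choose 2 := by
      have h2 := hsum_d' Finset.univ
      have h3 : ((Finset.univ : Finset (Fin m)).filter (fun i : Fin m => a ≤ (i:ℕ))).card
          = m - a := by
        have h4 : ((Finset.univ : Finset (Fin m)).filter (fun i : Fin m => (i:ℕ) < a)).card
            + ((Finset.univ : Finset (Fin m)).filter (fun i : Fin m => ¬ (i:ℕ) < a)).card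
            = m := by
          rw [Finset.card_filter_add_card_filter_not]
          simp
        rw [card_filter_lt m a ha] at h4
        have h5 : ((Finset.univ : Finset (Fin m)).filter (fun i : Fin m => a ≤ (i:ℕ)))
            = ((Finset.univ : Finset (Fin m)).filter (fun i : Fin m => ¬ (i:ℕ) < a)) := by
          apply Finset.filter_congr
          intro i _
          constructor <;> (intro; omega)
        rw [h5]
        omega
      have h6 : ∑ i : Fin m, s i.castSucc + a = (m+1).choose 2 := by
        rw [haa, ← Fin.sum_univ_castSucc s, hsums]
      rw [h3] at h2
      omega
    obtain ⟨r', hr', hdeg'⟩ := ih d' hd'L hd'sum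
    -- extend to Fin (m+1)
    set r'' : Fin (m+1) → Fin (m+1) → Bool := fun i j =>
      if hi : (i:ℕ) < m then
        if hj : (j:ℕ) < m then r' ⟨(i:ℕ), hi⟩ ⟨(j:ℕ), hj⟩ else decide (a ≤ (i:ℕ))
      else
        if hj : (j:ℕ) < m then decide ((j:ℕ) < a) else false
      with hr''def
    have htour'' : IsTournament (m+1) r'' := by
      constructor
      · intro i
        rw [hr''def]
        by_cases hi : (i:ℕ) < m
        · simp only [hi, dif_pos]
          exact hr'.1 _
        · simp only [hi, dif_neg, not_false_iff]
      · intro i j hij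
        rw [hr''def]
        by_cases hi : (i:ℕ) < m <;> by_cases hj : (j:ℕ) < m
        · simp only [hi, hj, dif_pos]
          apply hr'.2
          intro hcon
          apply hij
          have hv : ((⟨(i:ℕ), hi⟩ : Fin m) : ℕ) = ((⟨(j:ℕ), hj⟩ : Fin m) : ℕ) :=
            congrArg Fin.val hcon
          exact Fin.ext hv
        · simp only [hi, hj, dif_pos, dif_neg, not_false_iff]
          rcases le_or_gt a (i:ℕ) with hcase | hcase
          · simp [hcase, Nat.not_lt.mpr hcase]
          · simp [hcase, Nat.not_le.mpr hcase]
        · simp only [hi, hj, dif_pos, dif_neg, not_false_iff]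
          rcases le_or_gt a (j:ℕ) with hcase | hcase
          · simp [hcase, Nat.not_lt.mpr hcase]
          · simp [hcase, Nat.not_le.mpr hcase]
        · exfalso
          apply hij
          have hii : (i:ℕ) = m := by have := i.isLt; omega
          have hjj : (j:ℕ) = m := by have := j.isLt; omega
          exact Fin.ext (hii.trans hjj.symm)
    have hdeg'' : ∀ i, outDeg (m+1) r'' i = s i := by
      intro i
      unfold outDeg
      rw [Finset.card_filter]
      rw [Fin.sum_univ_castSucc (fun j => if r'' i j = true then 1 else 0)]
      by_cases hi : (i:ℕ) < m
      · have hilast : i = Fin.castSucc ⟨(i:ℕ), hi⟩ := Fin.ext rfl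
        have hterm : ∀ j : Fin m,
            (if r'' i j.castSucc = true then 1 else 0)
              = (if r' ⟨(i:ℕ), hi⟩ j = true then 1 else 0) := by
          intro j
          congr 1
          rw [hr''def]
          simp only [hi, dif_pos, Fin.coe_castSucc, j.isLt, dif_pos]
        have hlastterm : (if r'' i (Fin.last m) = true then 1 else 0)
            = (if a ≤ (i:ℕ) then 1 else 0) := by
          rw [hr''def]
          simp only [hi, dif_pos, Fin.val_last, lt_irrefl, dif_neg, not_false_iff]
          by_cases hcase : a ≤ (i:ℕ) <;> simp [hcase]
        rw [Finset.sum_congr rfl (fun j _ => hterm j), hlastterm]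
        have hsum' : ∑ j : Fin m, (if r' ⟨(i:ℕ), hi⟩ j = true then 1 else 0)
            = d' ⟨(i:ℕ), hi⟩ := by
          rw [← Finset.card_filter]
          exact hdeg' _
        rw [hsum']
        have hsv : s i = s (Fin.castSucc ⟨(i:ℕ), hi⟩) := by rw [← hilast]
        rw [hsv, hd'def]
        by_cases hcase : a ≤ (i:ℕ)
        · have hcase' : a ≤ ((⟨(i:ℕ), hi⟩ : Fin m) : ℕ) := hcase
          have := hpos ⟨(i:ℕ), hi⟩ hcase'
          simp only [hcase', if_true]
          omega
        · have hcase' : ¬ a ≤ ((⟨(i:ℕ), hi⟩ : Fin m) : ℕ) := hcase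
          simp only [hcase', if_false]
          omega
      · have hilast : i = Fin.last m := Fin.ext (by simp only [Fin.val_last]; have := i.isLt; omega)
        have hterm : ∀ j : Fin m,
            (if r'' i j.castSucc = true then 1 else 0)
              = (if (j:ℕ) < a then 1 else 0) := by
          intro j
          rw [hr''def]
          simp only [hi, dif_neg, not_false_iff, Fin.coe_castSucc, j.isLt, dif_pos]
          by_cases hcase : (j:ℕ) < a <;> simp [hcase]
        have hlastterm : (if r'' i (Fin.last m) = true then 1 else 0) = 0 := by
          rw [hr''def]
          simp [hi]
        rw [Finset.sum_congr rfl (fun j _ => hterm j), hlastterm]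
        rw [hilast, ← haa]
        have : ∑ j : Fin m, (if (j:ℕ) < a then 1 else 0)
            = ((Finset.univ : Finset (Fin m)).filter (fun j : Fin m => (j:ℕ) < a)).card := by
          rw [Finset.card_filter]
        rw [this, card_filter_lt m a ha]
        omega
    -- transport along τ
    refine ⟨fun i j => r'' (τ.symm i) (τ.symm j), ⟨?_, ?_⟩, ?_⟩
    · intro i
      exact htour''.1 _
    · intro i j hij
      exact htour''.2 _ _ (fun h => hij (by simpa using congrArg τ h))
    · intro i
      have hbij : outDeg (m+1) (fun i j => r'' (τ.symm i) (τ.symm j)) i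
          = outDeg (m+1) r'' (τ.symm i) := by
        unfold outDeg
        apply Finset.card_nbij' (fun j => τ.symm j) (fun j => τ j)
        · intro x hx
          rw [Finset.mem_coe, Finset.mem_filter] at hx ⊢
          exact ⟨Finset.mem_univ _, hx.2⟩
        · intro x hx
          rw [Finset.mem_coe, Finset.mem_filter] at hx ⊢
          refine ⟨Finset.mem_univ _, ?_⟩
          simpa using hx.2
        · intro x _; simp
        · intro x _; simp
      rw [hbij, hdeg'' (τ.symm i)]
      show d (τ (τ.symm i)) = d i
      rw [Equiv.apply_symm_apply]

lemma prefix_to_subset (n : ℕ) (s : Fin n → ℕ) (hm : Monotone s)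
    (hpartial : ∀ k ≤ n, Nat.choose k 2 ≤ scorePartial n s k) :
    ∀ A : Finset (Fin n), (A.card).choose 2 ≤ ∑ i ∈ A, s i := by
  cases n with
  | zero =>
    intro A
    have hA : A = ∅ := Finset.eq_empty_of_forall_notMem (fun x _ => x.elim0)
    rw [hA]
    simp
  | succ m =>
    intro A
    have hcA : A.card ≤ m + 1 := by
      have := Finset.card_le_univ A
      simpa using this
    have h1 := hpartial A.card hcA
    have h2 : scorePartial (m+1) s A.card = Pfx m s A.card := by
      unfold scorePartial Pfx
      exact sum_filter_lt m A.card s hcA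
    have h3 := sortedSum m s hm A 0 (fun i _ => Nat.zero_le _)
    simp only [Nat.zero_add] at h3
    have h4 : Pfx m s A.card = ∑ j ∈ Finset.range A.card, extSeq m s j := rfl
    omega

lemma score_iff (n : ℕ) (s : Fin n → ℕ) :
    IsScoreSeq n s ↔ ∃ r : Fin n → Fin n → Bool,
      IsTournament n r ∧ IsSortedOutDegrees n r s := by
  constructor
  · rintro ⟨hm, hub, hsum, hpartial⟩
    obtain ⟨r, hr, hdeg⟩ :=
      exists_tournament n s (prefix_to_subset n s hm hpartial) hsum
    exact ⟨r, hr, hm, Equiv.refl _, fun i => (hdeg i).symm⟩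
  · rintro ⟨r, hr, hmono, σ, hσ⟩
    have hdeg : ∀ i, s i = outDeg n r (σ i) := hσ
    refine ⟨hmono, ?_, ?_, ?_⟩
    · intro i
      rw [hdeg i]
      exact outDeg_le n r hr (σ i)
    · rw [Finset.sum_congr rfl (fun i _ => hdeg i), Equiv.sum_comp σ (outDeg n r)]
      have hcnt := tournament_count n r hr Finset.univ
      rw [Finset.card_univ, Fintype.card_fin] at hcnt
      rw [← hcnt]
      exact Finset.sum_congr rfl (fun i _ => rfl)
    · intro k hk
      unfold scorePartial
      rw [Finset.sum_congr rfl (fun i _ => hdeg i)]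
      set F := Finset.univ.filter (fun i : Fin n => (i : ℕ) < k) with hF
      have himg : ∑ i ∈ F, outDeg n r (σ i) = ∑ j ∈ F.image σ, outDeg n r j := by
        rw [Finset.sum_image (fun x _ y _ h => σ.injective h)]
      have hcard : (F.image σ).card = k := by
        rw [Finset.card_image_of_injective F σ.injective, hF, card_filter_lt n k hk]
      have hcnt := tournament_count n r hr (F.image σ)
      rw [hcard] at hcnt
      have hle : ∑ j ∈ F.image σ, ((F.image σ).filter (fun x => r j x = true)).card
          ≤ ∑ j ∈ F.image σ, outDeg n r j := by
        apply Finset.sum_le_sum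
        intro j _
        exact Finset.card_le_card
          (Finset.filter_subset_filter _ (Finset.subset_univ _))
      omega


/-- The sequences satisfying Landau's conditions are exactly
the score sequences of tournaments on `n` vertices, so they are equinumerous. -/
theorem landau_count_eq_tournament_score_count (n : ℕ) :
    Nat.card {s : Fin n → ℕ // IsScoreSeq n s} =
      Nat.card {s : Fin n → ℕ // ∃ r : Fin n → Fin n → Bool,
        IsTournament n r ∧ IsSortedOutDegrees n r s} := by
  exact Nat.card_congr (Equiv.subtypeEquivRight (fun s => score_iff n s))
end

section
/- For n ≥ 1, the number Nₙ of sequences 1 ≤ t₁ < t₂ < ⋯ < tₙ ≤ 2n−1 of integers whose sum is divisible by n equals (1/(2n)) · ∑_{d | n} (−1)^{n+d} · C(2d, d) · φ(n/d), where φ is Euler's totient function. -/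
open Finset Polynomial



/-- `N n`: the number of `n`-element subsets of `{1,…,2n−1}` with sum divisible by `n`
(equivalently, sequences `1 ≤ t₁ < ⋯ < tₙ ≤ 2n−1` with `∑ tᵢ ≡ 0 (mod n)`). -/
noncomputable def N (n : ℕ) : ℕ :=
  Nat.card {D : Finset ℕ // D ⊆ Finset.Icc 1 (2 * n - 1) ∧ D.card = n ∧ (∑ d ∈ D, d) % n = 0}


/-- Pointwise product formula over the m-th roots of unity. -/
lemma EGZ.prod_one_add_eval {m : ℕ} {ζ : ℂ} (hm : 0 < m) (hζ : IsPrimitiveRoot ζ m) (x : ℂ) :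
    ∏ i ∈ range m, (1 + ζ ^ i * x) = 1 + (-1 : ℂ) ^ (m + 1) * x ^ m := by
  have base : ∀ y : ℂ, y ^ m - 1 = ∏ i ∈ range m, (y - ζ ^ i) := by
    intro y
    have h := X_pow_sub_C_eq_prod hζ hm (one_pow m)
    have := congrArg (Polynomial.eval y) h
    simpa [eval_prod] using this
  by_cases hx : x = 0
  · simp [hx, zero_pow hm.ne']
  · have h1 : (-x⁻¹) ^ m - 1 = ∏ i ∈ range m, (-x⁻¹ - ζ ^ i) := base _
    have hxx : x * x⁻¹ = 1 := mul_inv_cancel₀ hx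
    have h2 : (-1 : ℂ) ^ m - x ^ m = (-1) ^ m * ∏ i ∈ range m, (1 + ζ ^ i * x) := by
      calc (-1 : ℂ) ^ m - x ^ m = x ^ m * ((-x⁻¹) ^ m - 1) := by
            rw [mul_sub, ← mul_pow, mul_neg, hxx]; ring
        _ = x ^ m * ∏ i ∈ range m, (-x⁻¹ - ζ ^ i) := by rw [h1]
        _ = ∏ i ∈ range m, (x * (-x⁻¹ - ζ ^ i)) := by
            rw [Finset.prod_mul_distrib, Finset.prod_const, Finset.card_range]
        _ = ∏ i ∈ range m, ((-1) * (1 + ζ ^ i * x)) := by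
            refine Finset.prod_congr rfl fun i _ => ?_
            rw [mul_sub, mul_neg, hxx]; ring
        _ = (-1) ^ m * ∏ i ∈ range m, (1 + ζ ^ i * x) := by
            rw [Finset.prod_mul_distrib, Finset.prod_const, Finset.card_range]
    have hsq : (-1 : ℂ) ^ m * (-1) ^ m = 1 := by
      rw [← pow_add]; exact Even.neg_one_pow ⟨m, rfl⟩
    calc ∏ i ∈ range m, (1 + ζ ^ i * x)
        = ((-1 : ℂ) ^ m * (-1) ^ m) * ∏ i ∈ range m, (1 + ζ ^ i * x) := by rw [hsq, one_mul]
      _ = (-1 : ℂ) ^ m * ((-1) ^ m - x ^ m) := by rw [mul_assoc, ← h2]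
      _ = (-1 : ℂ) ^ m * (-1) ^ m - (-1) ^ m * x ^ m := by ring
      _ = 1 + (-1 : ℂ) ^ (m + 1) * x ^ m := by rw [hsq]; ring

/-- Polynomial version. -/
lemma EGZ.prod_one_add_poly {m : ℕ} {ζ : ℂ} (hm : 0 < m) (hζ : IsPrimitiveRoot ζ m) :
    ∏ i ∈ range m, (1 + C (ζ ^ i) * X) = 1 + C ((-1 : ℂ) ^ (m + 1)) * X ^ m := by
  apply Polynomial.funext
  intro x
  have := EGZ.prod_one_add_eval hm hζ x
  simp only [eval_prod, eval_add, eval_one, eval_mul, eval_C, eval_X, eval_pow]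
  exact this

/-- Product over a full period block. -/
lemma EGZ.prod_blocks {m : ℕ} {ζ : ℂ} (hm : 0 < m) (hζ : IsPrimitiveRoot ζ m) (k : ℕ) :
    ∏ s ∈ range (m * k), (1 + C (ζ ^ s) * X) = (1 + C ((-1 : ℂ) ^ (m + 1)) * X ^ m) ^ k := by
  induction k with
  | zero => simp
  | succ k ih =>
    have : m * (k + 1) = m * k + m := by ring
    rw [this, Finset.prod_range_add, ih,
      pow_succ (1 + C ((-1 : ℂ) ^ (m + 1)) * X ^ m) k]
    congr 1
    rw [← EGZ.prod_one_add_poly hm hζ]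
    refine Finset.prod_congr rfl fun i _ => ?_
    congr 2
    rw [pow_add, pow_mul, hζ.pow_eq_one, one_pow, one_mul]

/-- Coefficient of the expanded power. -/
lemma EGZ.coeff_pow (a : ℂ) (m k g : ℕ) (hm : 0 < m) (hg : g ≤ k) :
    ((1 + C a * X ^ m) ^ k).coeff (m * g) = a ^ g * (k.choose g : ℂ) := by
  rw [add_comm (1 : ℂ[X]), add_pow]
  rw [Polynomial.finset_sum_coeff]
  rw [Finset.sum_eq_single g]
  · rw [mul_pow, ← C_pow, ← pow_mul, one_pow, mul_one, ← C_eq_natCast,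
      mul_right_comm, ← C_mul, coeff_C_mul, coeff_X_pow, if_pos rfl, mul_one, mul_comm]
  · intro j hj hjg
    rw [mul_pow, ← C_pow, ← pow_mul, one_pow, mul_one, ← C_eq_natCast,
      mul_right_comm, ← C_mul, coeff_C_mul, coeff_X_pow, if_neg, mul_zero]
    exact fun h => hjg (Nat.eq_of_mul_eq_mul_left hm (by omega)).symm
  · intro h
    exact absurd (Finset.mem_range.mpr (Nat.lt_succ_of_le hg)) h

/-- Coefficient extraction: the generating function of subset sums. -/
lemma EGZ.coeff_prod_eq_sum (s : Finset ℕ) (f : ℕ → ℂ) (c : ℕ) :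
    (∏ i ∈ s, (1 + C (f i) * X)).coeff c
      = ∑ S ∈ s.powersetCard c, ∏ i ∈ S, f i := by
  have : ∀ i ∈ s, (1 + C (f i) * X) = (C (f i) * X + 1) := fun i _ => by ring
  rw [Finset.prod_congr rfl this, Finset.prod_add]
  simp only [Finset.prod_const_one, mul_one]
  rw [Polynomial.finset_sum_coeff]
  have hterm : ∀ t : Finset ℕ, (∏ i ∈ t, (C (f i) * X)).coeff c
      = if t.card = c then ∏ i ∈ t, f i else 0 := by
    intro t
    rw [Finset.prod_mul_distrib, Finset.prod_const, ← map_prod, coeff_C_mul, coeff_X_pow]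
    by_cases h : t.card = c
    · rw [if_pos h, if_pos h.symm, mul_one]
    · rw [if_neg h, if_neg (fun hh => h hh.symm), mul_zero]
  rw [Finset.sum_congr rfl fun t _ => hterm t, powersetCard_eq_filter, Finset.sum_filter]

/-- Key evaluation: sum over n-subsets of {0,…,2n−1} of ζ^(sum), for ζ primitive m-th root,
n = m*g. -/
lemma EGZ.key {m g : ℕ} {ζ : ℂ} (hm : 0 < m) (hg : 0 < g) (hζ : IsPrimitiveRoot ζ m) :
    ∑ S ∈ (range (2 * (m * g))).powersetCard (m * g), ∏ s ∈ S, ζ ^ s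
      = (-1 : ℂ) ^ (m * g + g) * ((2 * g).choose g : ℂ) := by
  have h1 : (∏ i ∈ range (2 * (m * g)), (1 + C (ζ ^ i) * X)).coeff (m * g)
      = ∑ S ∈ (range (2 * (m * g))).powersetCard (m * g), ∏ s ∈ S, ζ ^ s :=
    EGZ.coeff_prod_eq_sum _ _ _
  rw [← h1, show 2 * (m * g) = m * (2 * g) by ring, EGZ.prod_blocks hm hζ,
    EGZ.coeff_pow _ _ _ _ hm (by omega)]
  congr 1
  rw [← pow_mul]
  have : (m + 1) * g = m * g + g := by ring
  rw [this]

/-- Root-of-unity indicator sum. -/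
lemma EGZ.indicator {n : ℕ} {ω : ℂ} (hn : 0 < n) (hω : IsPrimitiveRoot ω n) (s : ℕ) :
    ∑ k ∈ range n, ω ^ (k * s) = if s % n = 0 then (n : ℂ) else 0 := by
  have hrw : ∀ k, ω ^ (k * s) = (ω ^ s) ^ k := fun k => by rw [← pow_mul, mul_comm]
  rw [Finset.sum_congr rfl fun k _ => hrw k]
  by_cases h : s % n = 0
  · have : ω ^ s = 1 := (hω.pow_eq_one_iff_dvd s).mpr (Nat.dvd_of_mod_eq_zero h)
    simp [this, if_pos h]
  · rw [if_neg h]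
    have hne : ω ^ s ≠ 1 := fun hh =>
      h (Nat.mod_eq_zero_of_dvd ((hω.pow_eq_one_iff_dvd s).mp hh))
    have hxn : (ω ^ s) ^ n = 1 := by
      rw [← pow_mul, mul_comm, pow_mul, hω.pow_eq_one, one_pow]
    rw [geom_sum_eq hne, hxn, sub_self, zero_div]


lemma EGZ.inner_sum {n k : ℕ} {ω : ℂ} (hn : 0 < n) (hω : IsPrimitiveRoot ω n) :
    ∑ S ∈ (range (2 * n)).powersetCard n, ∏ s ∈ S, (ω ^ k) ^ s
      = (-1 : ℂ) ^ (n + Nat.gcd k n) * (((2 * Nat.gcd k n).choose (Nat.gcd k n)) : ℂ) := by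
  set d := Nat.gcd k n with hdd
  have hd : d ∣ n := Nat.gcd_dvd_right k n
  have hdk : d ∣ k := Nat.gcd_dvd_left k n
  have hd0 : 0 < d := Nat.gcd_pos_of_pos_right k hn
  set m := n / d with hmm
  have hmg : m * d = n := Nat.div_mul_cancel hd
  have hm0 : 0 < m := Nat.div_pos (Nat.le_of_dvd hn hd) hd0
  have hprim : IsPrimitiveRoot (ω ^ k) m := by
    have h1 : IsPrimitiveRoot (ω ^ d) m := hω.pow_of_dvd hd0.ne' hd
    have h2 : IsPrimitiveRoot ((ω ^ d) ^ (k / d)) m :=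
      h1.pow_of_coprime _ (Nat.coprime_div_gcd_div_gcd hd0)
    rwa [← pow_mul, Nat.mul_div_cancel' hdk] at h2
  have := EGZ.key hm0 hd0 hprim
  rw [hmg] at this
  rw [this]

lemma EGZ.complex_count (n : ℕ) (hn : 1 ≤ n) :
    (n : ℂ) * ((((range (2 * n)).powersetCard n).filter
        (fun S => (∑ s ∈ S, s) % n = 0)).card : ℂ)
      = ∑ d ∈ n.divisors,
          (-1 : ℂ) ^ (n + d) * ((2 * d).choose d : ℂ) * (Nat.totient (n / d) : ℂ) := by
  have hn0 : 0 < n := hn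
  obtain ⟨ω, hω⟩ : ∃ ω : ℂ, IsPrimitiveRoot ω n :=
    ⟨_, Complex.isPrimitiveRoot_exp n hn0.ne'⟩
  have h1 : ((((range (2 * n)).powersetCard n).filter
        (fun S => (∑ s ∈ S, s) % n = 0)).card : ℂ)
      = ∑ S ∈ (range (2 * n)).powersetCard n,
          if (∑ s ∈ S, s) % n = 0 then (1 : ℂ) else 0 := by
    rw [Finset.card_filter]
    push_cast
    rfl
  rw [h1, Finset.mul_sum]
  have h2 : ∀ S ∈ (range (2 * n)).powersetCard n,
      ((n : ℂ) * if (∑ s ∈ S, s) % n = 0 then (1 : ℂ) else 0)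
        = ∑ k ∈ range n, ∏ s ∈ S, (ω ^ k) ^ s := by
    intro S _
    have := EGZ.indicator hn0 hω (∑ s ∈ S, s)
    rw [mul_ite, mul_one, mul_zero, ← this]
    refine Finset.sum_congr rfl fun k _ => ?_
    rw [pow_mul, ← Finset.prod_pow_eq_pow_sum]
  rw [Finset.sum_congr rfl h2, Finset.sum_comm]
  have h3 : ∀ k ∈ range n,
      (∑ S ∈ (range (2 * n)).powersetCard n, ∏ s ∈ S, (ω ^ k) ^ s)
        = (-1 : ℂ) ^ (n + Nat.gcd n k) * (((2 * Nat.gcd n k).choose (Nat.gcd n k)) : ℂ) := by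
    intro k _
    rw [Nat.gcd_comm n k]
    exact EGZ.inner_sum hn0 hω
  rw [Finset.sum_congr rfl h3]
  rw [← Finset.sum_fiberwise_of_maps_to
    (g := fun k => Nat.gcd n k) (t := n.divisors)
    (fun k _ => Nat.mem_divisors.mpr ⟨Nat.gcd_dvd_left n k, hn0.ne'⟩)]
  refine Finset.sum_congr rfl fun d hd => ?_
  have hdvd : d ∣ n := (Nat.mem_divisors.mp hd).1
  have hcard : ((range n).filter (fun k => Nat.gcd n k = d)).card = Nat.totient (n / d) :=
    (Nat.totient_div_of_dvd hdvd).symm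
  have h4 : ∀ k ∈ (range n).filter (fun k => Nat.gcd n k = d),
      ((-1 : ℂ) ^ (n + Nat.gcd n k) * (((2 * Nat.gcd n k).choose (Nat.gcd n k)) : ℂ))
        = (-1 : ℂ) ^ (n + d) * (((2 * d).choose d) : ℂ) := by
    intro k hk
    rw [(Finset.mem_filter.mp hk).2]
  rw [Finset.sum_congr rfl h4, Finset.sum_const, hcard, nsmul_eq_mul]
  ring

/-- `N n` as a Finset card. -/
lemma EGZ.N_eq (n : ℕ) :
    N n = (((Finset.Icc 1 (2 * n - 1)).powersetCard n).filter
        (fun D => (∑ d ∈ D, d) % n = 0)).card := by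
  rw [N, ← Nat.card_eq_finsetCard]
  apply Nat.card_congr
  apply Equiv.subtypeEquivRight
  intro D
  simp only [Finset.mem_filter, Finset.mem_powersetCard]
  tauto

/-- Subsets of `range (2n)` avoiding `0` are the same as subsets of `Icc 1 (2n-1)`. -/
lemma EGZ.filter_not_mem (n : ℕ) (hn : 1 ≤ n) :
    (((range (2 * n)).powersetCard n).filter
        (fun S => (∑ s ∈ S, s) % n = 0 ∧ 0 ∉ S))
      = (((Finset.Icc 1 (2 * n - 1)).powersetCard n).filter
        (fun D => (∑ d ∈ D, d) % n = 0)) := by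
  ext S
  simp only [Finset.mem_filter, Finset.mem_powersetCard]
  constructor
  · rintro ⟨⟨hsub, hcard⟩, hsum, h0⟩
    refine ⟨⟨fun x hx => ?_, hcard⟩, hsum⟩
    have hx1 : x < 2 * n := Finset.mem_range.mp (hsub hx)
    have hx0 : x ≠ 0 := fun h => h0 (h ▸ hx)
    rw [Finset.mem_Icc]; omega
  · rintro ⟨⟨hsub, hcard⟩, hsum⟩
    have h0 : 0 ∉ S := fun h => by
      have := Finset.mem_Icc.mp (hsub h); omega
    refine ⟨⟨fun x hx => ?_, hcard⟩, hsum, h0⟩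
    have := Finset.mem_Icc.mp (hsub hx)
    rw [Finset.mem_range]; omega

/-- Complementation bijects the `0 ∈ S` part onto the `0 ∉ S` part. -/
lemma EGZ.card_mem_eq (n : ℕ) (hn : 1 ≤ n) :
    (((range (2 * n)).powersetCard n).filter
        (fun S => (∑ s ∈ S, s) % n = 0 ∧ 0 ∈ S)).card
      = (((range (2 * n)).powersetCard n).filter
        (fun S => (∑ s ∈ S, s) % n = 0 ∧ 0 ∉ S)).card := by
  have hsumrange : (∑ s ∈ range (2 * n), s) % n = 0 := by
    have h2 : (∑ s ∈ range (2 * n), s) * 2 = (2 * n) * (2 * n - 1) :=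
      Finset.sum_range_id_mul_two (2 * n)
    have h3 : (2 * n) * (2 * n - 1) = 2 * (n * (2 * n - 1)) := by rw [mul_assoc]
    have : (∑ s ∈ range (2 * n), s) = n * (2 * n - 1) := by omega
    rw [this, Nat.mul_mod_right]
  apply Finset.card_bij (fun S _ => range (2 * n) \ S)
  · intro S hS
    simp only [Finset.mem_filter, Finset.mem_powersetCard] at hS ⊢
    obtain ⟨⟨hsub, hcard⟩, hsum, h0⟩ := hS
    have hcard2 : (range (2 * n) \ S).card = n := by
      rw [Finset.card_sdiff_of_subset hsub, Finset.card_range]; omega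
    have hsumeq : (∑ s ∈ range (2 * n) \ S, s) + (∑ s ∈ S, s) = ∑ s ∈ range (2 * n), s := by
      rw [Finset.sum_sdiff hsub]
    have hdvd : n ∣ ∑ s ∈ range (2 * n) \ S, s := by
      have d1 : n ∣ ∑ s ∈ range (2 * n), s := Nat.dvd_of_mod_eq_zero hsumrange
      have d2 : n ∣ ∑ s ∈ S, s := Nat.dvd_of_mod_eq_zero hsum
      have he : (∑ s ∈ range (2 * n) \ S, s) = (∑ s ∈ range (2 * n), s) - (∑ s ∈ S, s) := by
        omega
      rw [he]; exact Nat.dvd_sub d1 d2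
    exact ⟨⟨Finset.sdiff_subset, hcard2⟩, Nat.mod_eq_zero_of_dvd hdvd,
      fun h => (Finset.mem_sdiff.mp h).2 h0⟩
  · intro S hS T hT h
    simp only [Finset.mem_filter, Finset.mem_powersetCard] at hS hT
    have := congrArg (fun X => range (2 * n) \ X) h
    simpa [Finset.sdiff_sdiff_eq_self hS.1.1, Finset.sdiff_sdiff_eq_self hT.1.1] using this
  · intro T hT
    simp only [Finset.mem_filter, Finset.mem_powersetCard] at hT
    obtain ⟨⟨hsub, hcard⟩, hsum, h0⟩ := hT
    refine ⟨range (2 * n) \ T, ?_, Finset.sdiff_sdiff_eq_self hsub⟩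
    simp only [Finset.mem_filter, Finset.mem_powersetCard]
    have hcard2 : (range (2 * n) \ T).card = n := by
      rw [Finset.card_sdiff_of_subset hsub, Finset.card_range]; omega
    have hsumeq : (∑ s ∈ range (2 * n) \ T, s) + (∑ s ∈ T, s) = ∑ s ∈ range (2 * n), s := by
      rw [Finset.sum_sdiff hsub]
    have hdvd : n ∣ ∑ s ∈ range (2 * n) \ T, s := by
      have d1 : n ∣ ∑ s ∈ range (2 * n), s := Nat.dvd_of_mod_eq_zero hsumrange
      have d2 : n ∣ ∑ s ∈ T, s := Nat.dvd_of_mod_eq_zero hsum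
      have he : (∑ s ∈ range (2 * n) \ T, s) = (∑ s ∈ range (2 * n), s) - (∑ s ∈ T, s) := by
        omega
      rw [he]; exact Nat.dvd_sub d1 d2
    refine ⟨⟨Finset.sdiff_subset, hcard2⟩, Nat.mod_eq_zero_of_dvd hdvd, ?_⟩
    rw [Finset.mem_sdiff]
    exact ⟨Finset.mem_range.mpr (by omega), h0⟩

lemma EGZ.U_card (n : ℕ) (hn : 1 ≤ n) :
    (((range (2 * n)).powersetCard n).filter
        (fun S => (∑ s ∈ S, s) % n = 0)).card = 2 * N n := by
  have hsplit := Finset.card_filter_add_card_filter_not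
    (s := ((range (2 * n)).powersetCard n).filter (fun S => (∑ s ∈ S, s) % n = 0))
    (p := fun S => 0 ∈ S)
  have e1 : (((range (2 * n)).powersetCard n).filter (fun S => (∑ s ∈ S, s) % n = 0)).filter
      (fun S => 0 ∈ S) = ((range (2 * n)).powersetCard n).filter
        (fun S => (∑ s ∈ S, s) % n = 0 ∧ 0 ∈ S) := by
    rw [Finset.filter_filter]
  have e2 : (((range (2 * n)).powersetCard n).filter (fun S => (∑ s ∈ S, s) % n = 0)).filter
      (fun S => ¬ 0 ∈ S) = ((range (2 * n)).powersetCard n).filter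
        (fun S => (∑ s ∈ S, s) % n = 0 ∧ 0 ∉ S) := by
    rw [Finset.filter_filter]
  rw [e1, e2, EGZ.card_mem_eq n hn, EGZ.filter_not_mem n hn, ← EGZ.N_eq n] at hsplit
  omega

/-- von Sterneck-type formula:
`Nₙ = (1/(2n)) ∑_{d|n} (−1)^{n+d} C(2d,d) φ(n/d)`. -/
theorem EGZ_number_formula (n : ℕ) (hn : 1 ≤ n) :
    (N n : ℚ) = (1 / (2 * n)) *
      ∑ d ∈ n.divisors, (-1 : ℚ) ^ (n + d) * (Nat.choose (2 * d) d) * (Nat.totient (n / d)) := by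
  have hC := EGZ.complex_count n hn
  rw [EGZ.U_card n hn] at hC
  have hn0 : (n : ℂ) ≠ 0 := Nat.cast_ne_zero.mpr (by omega)
  apply Rat.cast_injective (α := ℂ)
  push_cast
  push_cast at hC
  have h2n : (2 : ℂ) * (n : ℂ) ≠ 0 := by
    have : ((2 * n : ℕ) : ℂ) ≠ 0 := Nat.cast_ne_zero.mpr (by omega)
    push_cast at this
    exact this
  rw [div_mul_eq_mul_div, one_mul, eq_div_iff h2n]
  linear_combination hC
end

section
/- For n ≥ 1, the number of n-element subsets D ⊆ {1, …, 2n} with ∑_{d ∈ D} d ≡ 0 (mod n) equals 2·Nₙ, where Nₙ is the number of n-element subsets of {1, …, 2n−1} whose sum is ≡ 0 (mod n). -/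
open Finset

lemma Nat.card_subtype_subset_eq_card_filter_powerset {α : Type*} (s : Finset α)
    (p : Finset α → Prop) [DecidablePred p] :
    Nat.card {D : Finset α // D ⊆ s ∧ p D} = #{D ∈ s.powerset | p D} := by
  rw [← Nat.card_eq_finsetCard]
  exact Nat.card_congr (Equiv.subtypeEquivRight fun D => by simp)

lemma filter_powerset_insert_notMem {α : Type*} [DecidableEq α] {a : α} {s : Finset α}
    (ha : a ∉ s) (p : Finset α → Prop) [DecidablePred p] :
    {D ∈ {D ∈ (insert a s).powerset | p D} | a ∉ D} = {D ∈ s.powerset | p D} := by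
  ext D
  simp only [mem_filter, mem_powerset]
  constructor
  · rintro ⟨⟨hD, hp⟩, haD⟩
    exact ⟨(subset_insert_iff_of_notMem haD).1 hD, hp⟩
  · rintro ⟨hD, hp⟩
    exact ⟨⟨hD.trans (subset_insert _ _), hp⟩, fun h => ha (hD h)⟩

section Complement

variable {α : Type*} [DecidableEq α] {t : Finset α} {𝒜 : Finset (Finset α)}

lemma card_filter_mem_eq_card_filter_notMem_of_sdiff_mem (h𝒜t : ∀ D ∈ 𝒜, D ⊆ t)
    (h𝒜 : ∀ D ∈ 𝒜, t \ D ∈ 𝒜) {a : α} (ha : a ∈ t) :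
    #{D ∈ 𝒜 | a ∈ D} = #{D ∈ 𝒜 | a ∉ D} := by
  refine card_nbij' (t \ ·) (t \ ·) ?_ ?_ ?_ ?_ <;> intro D hD <;>
    simp only [coe_filter, Set.mem_ofPred_eq] at hD
  · simpa [h𝒜 D hD.1, ha] using hD.2
  · simpa [h𝒜 D hD.1, ha] using hD.2
  · exact Finset.sdiff_sdiff_eq_self (h𝒜t D hD.1)
  · exact Finset.sdiff_sdiff_eq_self (h𝒜t D hD.1)

lemma card_eq_two_mul_card_filter_notMem_of_sdiff_mem (h𝒜t : ∀ D ∈ 𝒜, D ⊆ t)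
    (h𝒜 : ∀ D ∈ 𝒜, t \ D ∈ 𝒜) {a : α} (ha : a ∈ t) :
    #𝒜 = 2 * #{D ∈ 𝒜 | a ∉ D} := by
  rw [← card_filter_add_card_filter_not (a ∈ ·),
    card_filter_mem_eq_card_filter_notMem_of_sdiff_mem h𝒜t h𝒜 ha, two_mul]

end Complement

lemma Nat.dvd_sum_sdiff {α : Type*} [DecidableEq α] {s t : Finset α} {f : α → ℕ} {n : ℕ}
    (hst : s ⊆ t) (ht : n ∣ ∑ i ∈ t, f i) (hs : n ∣ ∑ i ∈ s, f i) :
    n ∣ ∑ i ∈ t \ s, f i := by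
  rw [← sum_sdiff hst] at ht
  exact (Nat.dvd_add_left hs).mp ht

lemma sum_Icc_one_two_mul (n : ℕ) : ∑ i ∈ Icc 1 (2 * n), i = n * (2 * n + 1) := by
  induction n with
  | zero => simp
  | succ n ih =>
    rw [show 2 * (n + 1) = 2 * n + 1 + 1 by ring, sum_Icc_succ_top (by omega),
      sum_Icc_succ_top (by omega), ih]
    ring

/-- There are `2Nₙ` many `n`-element subsets of `{1,…,2n}` with sum `≡ 0 (mod n)`. -/
theorem card_bridges_sum_mod_eq_two_N (n : ℕ) (hn : 1 ≤ n) :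
    Nat.card {D : Finset ℕ //
        D ⊆ Finset.Icc 1 (2 * n) ∧ D.card = n ∧ (∑ d ∈ D, d) % n = 0} = 2 * N n := by
  classical
  set p : Finset ℕ → Prop := fun D => D.card = n ∧ (∑ d ∈ D, d) % n = 0
  have hIcc : Icc 1 (2 * n) = insert (2 * n) (Icc 1 (2 * n - 1)) := by
    ext x; simp only [mem_Icc, mem_insert]; omega
  have h2n : 2 * n ∉ Icc 1 (2 * n - 1) := by simp only [mem_Icc]; omega
  have hclosed : ∀ D ∈ {D ∈ (Icc 1 (2 * n)).powerset | p D},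
      Icc 1 (2 * n) \ D ∈ {D ∈ (Icc 1 (2 * n)).powerset | p D} := by
    simp only [mem_filter, mem_powerset, p, ← Nat.dvd_iff_mod_eq_zero]
    rintro D ⟨hD, hcard, hsum⟩
    refine ⟨sdiff_subset, by rw [card_sdiff_of_subset hD, Nat.card_Icc, hcard]; omega, ?_⟩
    exact Nat.dvd_sum_sdiff hD (sum_Icc_one_two_mul n ▸ dvd_mul_right n _) hsum
  rw [N, Nat.card_subtype_subset_eq_card_filter_powerset _ p,
    Nat.card_subtype_subset_eq_card_filter_powerset _ p,
    card_eq_two_mul_card_filter_notMem_of_sdiff_mem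
      (fun D hD => mem_powerset.1 (mem_filter.1 hD).1) hclosed
      (show 2 * n ∈ Icc 1 (2 * n) by simp only [mem_Icc]; omega),
    hIcc, filter_powerset_insert_notMem h2n]
end

section
/- A nondecreasing integer sequence 0 ≤ s₁ ≤ ⋯ ≤ sₙ ≤ n−1 is a score sequence (i.e., ∑ sᵢ = C(n,2) and all partial sums ∑_{i=1}^k sᵢ ≥ C(k,2)) if and only if its associated bridge B with down steps at times dᵢ = sᵢ + i satisfies a(B) = 0 and a(B^{(2k)}) ≥ 0 for every 0 < k < n with B_{2k} = 0, where B^{(2k)} = (B₀,…,B_{2k}) and a denotes sawtooth area. -/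
/-- The sawtooth area of the initial sub-walk `(B₀,…,B_{2k})`:
`(1/2)[k + ∑_{t=1}^{2k} (2k+1−t)(B_t − B_{t−1})]`. -/
noncomputable def subArea (B : ℕ → ℤ) (k : ℕ) : ℚ :=
  (1 / 2 : ℚ) * ((k : ℚ) +
    ∑ t ∈ Finset.Icc 1 (2 * k), ((2 * k + 1 : ℚ) - t) * ((B t : ℚ) - (B (t - 1) : ℚ)))


-- telescoping
lemma LB_tele (f : ℕ → ℚ) (N : ℕ) :
    ∑ t ∈ Finset.Icc 1 N, (f t - f (t - 1)) = f N - f 0 := by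
  induction N with
  | zero => simp
  | succ N ih =>
    rw [Finset.sum_Icc_succ_top (by omega), ih]
    simp

-- Abel summation
lemma LB_abel (f : ℕ → ℚ) (hf0 : f 0 = 0) (N : ℕ) :
    ∑ t ∈ Finset.Icc 1 N, ((N : ℚ) + 1 - t) * (f t - f (t - 1)) =
      ∑ t ∈ Finset.Icc 1 N, f t := by
  induction N with
  | zero => simp
  | succ N ih =>
    have h1 : ∀ t : ℕ, (((N + 1 : ℕ) : ℚ) + 1 - t) * (f t - f (t - 1))
        = ((N : ℚ) + 1 - t) * (f t - f (t - 1)) + (f t - f (t - 1)) := by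
      intro t; push_cast; ring
    rw [Finset.sum_congr rfl (fun t _ => h1 t), Finset.sum_add_distrib, LB_tele f, hf0,
      Finset.sum_Icc_succ_top (by omega : 1 ≤ N + 1) (fun t => ((N:ℚ) + 1 - t) * (f t - f (t-1))),
      ih, Finset.sum_Icc_succ_top (by omega : 1 ≤ N + 1) f]
    push_cast
    ring

lemma LB_sum_Icc_id (N : ℕ) : ∑ t ∈ Finset.Icc 1 N, (t : ℚ) = N * (N + 1) / 2 := by
  induction N with
  | zero => simp
  | succ N ih =>
    rw [Finset.sum_Icc_succ_top (by omega), ih]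
    push_cast; ring

lemma LB_sum_range_id (k : ℕ) : ∑ j ∈ Finset.range k, ((j : ℚ) + 1) = k * (k + 1) / 2 := by
  induction k with
  | zero => simp
  | succ k ih => rw [Finset.sum_range_succ, ih]; push_cast; ring

-- B t = t - 2 * count
lemma LB_Bval (n : ℕ) (s : Fin n → ℕ) (hinj : Function.Injective (fun i : Fin n => s i + i + 1))
    (B : ℕ → ℤ)
    (hB : ∀ t, B t = ∑ u ∈ Finset.Icc 1 t,
      (if ∃ i : Fin n, s i + (i : ℕ) + 1 = u then (-1 : ℤ) else 1)) (t : ℕ) :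
    B t = (t : ℤ) - 2 * ((Finset.univ.filter fun i : Fin n => s i + i + 1 ≤ t).card : ℤ) := by
  rw [hB t]
  have h1 : ∀ u : ℕ, (if ∃ i : Fin n, s i + (i : ℕ) + 1 = u then (-1 : ℤ) else 1)
      = 1 - 2 * (if ∃ i : Fin n, s i + (i : ℕ) + 1 = u then (1 : ℤ) else 0) := by
    intro u; split <;> ring
  rw [Finset.sum_congr rfl (fun u _ => h1 u), Finset.sum_sub_distrib, Finset.sum_const,
    ← Finset.mul_sum]
  have h2 : ∑ u ∈ Finset.Icc 1 t, (if ∃ i : Fin n, s i + (i : ℕ) + 1 = u then (1 : ℤ) else 0)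
      = (((Finset.Icc 1 t).filter (fun u => ∃ i : Fin n, s i + (i : ℕ) + 1 = u)).card : ℤ) := by
    rw [Finset.sum_boole]
  have h3 : (Finset.Icc 1 t).filter (fun u => ∃ i : Fin n, s i + (i : ℕ) + 1 = u)
      = Finset.image (fun i : Fin n => s i + i + 1)
          (Finset.univ.filter fun i : Fin n => s i + i + 1 ≤ t) := by
    ext u
    simp only [Finset.mem_filter, Finset.mem_Icc, Finset.mem_image, Finset.mem_univ, true_and]
    constructor
    · rintro ⟨⟨h1u, h2u⟩, i, hi⟩; exact ⟨i, by omega, hi⟩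
    · rintro ⟨i, hle, rfl⟩; exact ⟨⟨by omega, hle⟩, i, rfl⟩
  rw [h2, h3, Finset.card_image_of_injective _ hinj, Nat.card_Icc]
  simp

-- swap the double count
lemma LB_swap (n : ℕ) (s : Fin n → ℕ) (N : ℕ) :
    ∑ t ∈ Finset.Icc 1 N, (Finset.univ.filter fun i : Fin n => s i + i + 1 ≤ t).card
      = ∑ i ∈ (Finset.univ.filter fun i : Fin n => s i + i + 1 ≤ N), (N + 1 - (s i + i + 1)) := by
  have h1 : ∀ t, (Finset.univ.filter fun i : Fin n => s i + i + 1 ≤ t).card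
      = ∑ i : Fin n, if s i + i + 1 ≤ t then 1 else 0 := by
    intro t; rw [Finset.sum_boole]; simp
  rw [Finset.sum_congr rfl (fun t _ => h1 t), Finset.sum_comm]
  have h2 : ∀ i : Fin n, ∑ t ∈ Finset.Icc 1 N, (if s i + i + 1 ≤ t then 1 else 0)
      = N + 1 - (s i + i + 1) := by
    intro i
    rw [Finset.sum_boole]
    have : (Finset.Icc 1 N).filter (fun t => s i + i + 1 ≤ t) = Finset.Icc (s i + i + 1) N := by
      ext t
      simp only [Finset.mem_filter, Finset.mem_Icc]
      omega
    rw [this, Nat.card_Icc]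
    simp
  rw [Finset.sum_congr rfl (fun i _ => h2 i)]
  rw [← Finset.sum_filter_add_sum_filter_not Finset.univ (fun i : Fin n => s i + i + 1 ≤ N)]
  have h3 : ∑ i ∈ (Finset.univ.filter fun i : Fin n => ¬ (s i + i + 1 ≤ N)), (N + 1 - (s i + i + 1)) = 0 := by
    apply Finset.sum_eq_zero
    intro i hi
    simp only [Finset.mem_filter] at hi
    omega
  rw [h3, add_zero]

-- filter (i < k) is the image of Fin k
lemma LB_map (n k : ℕ) (hk : k ≤ n) :
    Finset.univ.filter (fun i : Fin n => (i : ℕ) < k)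
      = Finset.univ.map (Fin.castLEEmb hk) := by
  ext i
  simp only [Finset.mem_filter, Finset.mem_univ, true_and, Finset.mem_map, Fin.castLEEmb,
    Function.Embedding.coeFn_mk]
  constructor
  · intro hi; exact ⟨⟨i, hi⟩, by simp [Fin.castLE, Fin.ext_iff]⟩
  · rintro ⟨j, rfl⟩; exact j.isLt

lemma LB_card_lt (n k : ℕ) (hk : k ≤ n) :
    (Finset.univ.filter (fun i : Fin n => (i : ℕ) < k)).card = k := by
  rw [LB_map n k hk, Finset.card_map, Finset.card_univ, Fintype.card_fin]

-- down-set of card k equals {i < k}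
lemma LB_lowerset (n : ℕ) (s : Fin n → ℕ) (hmono : Monotone s) (k : ℕ) (hk : k ≤ n) (N : ℕ)
    (hcard : (Finset.univ.filter fun i : Fin n => s i + i + 1 ≤ N).card = k) :
    (Finset.univ.filter fun i : Fin n => s i + i + 1 ≤ N)
      = Finset.univ.filter (fun i : Fin n => (i : ℕ) < k) := by
  have hsub : (Finset.univ.filter fun i : Fin n => s i + i + 1 ≤ N)
      ⊆ Finset.univ.filter (fun i : Fin n => (i : ℕ) < k) := by
    intro i hi
    simp only [Finset.mem_filter, Finset.mem_univ, true_and] at hi ⊢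
    by_contra hlt
    push_neg at hlt
    have hIic : Finset.Iic i ⊆ (Finset.univ.filter fun i : Fin n => s i + i + 1 ≤ N) := by
      intro j hj
      simp only [Finset.mem_Iic] at hj
      simp only [Finset.mem_filter, Finset.mem_univ, true_and]
      have h1 : s j ≤ s i := hmono hj
      have h2 : (j : ℕ) ≤ i := hj
      omega
    have := Finset.card_le_card hIic
    rw [Fin.card_Iic, hcard] at this
    omega
  exact Finset.eq_of_subset_of_card_le hsub (by rw [hcard, LB_card_lt n k hk])
-- subArea in terms of counts
lemma LB_area_count (n : ℕ) (s : Fin n → ℕ)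
    (hinj : Function.Injective (fun i : Fin n => s i + i + 1)) (B : ℕ → ℤ)
    (hB : ∀ t, B t = ∑ u ∈ Finset.Icc 1 t,
      (if ∃ i : Fin n, s i + (i : ℕ) + 1 = u then (-1 : ℤ) else 1)) (k : ℕ) :
    subArea B k = (k : ℚ) ^ 2 + k -
      ∑ t ∈ Finset.Icc 1 (2 * k),
        ((Finset.univ.filter fun i : Fin n => s i + i + 1 ≤ t).card : ℚ) := by
  have hB0 : B 0 = 0 := by rw [hB 0]; simp
  have habel := LB_abel (fun t => ((B t : ℚ))) (by simp [hB0]) (2 * k)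
  have hco : ∀ t : ℕ, ((2 * k + 1 : ℚ) - t) = (((2 * k : ℕ) : ℚ) + 1 - t) := by
    intro t; push_cast; ring
  unfold subArea
  rw [Finset.sum_congr rfl (fun t _ => by rw [hco t]), habel]
  have hBt : ∀ t : ℕ, ((B t : ℚ)) = (t : ℚ) -
      2 * ((Finset.univ.filter fun i : Fin n => s i + i + 1 ≤ t).card : ℚ) := by
    intro t
    rw [LB_Bval n s hinj B hB t]
    push_cast
    ring
  rw [Finset.sum_congr rfl (fun t _ => hBt t), Finset.sum_sub_distrib, LB_sum_Icc_id,
    ← Finset.mul_sum]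
  push_cast
  ring

-- subArea value when the down-steps before 2k are exactly those of index < k
lemma LB_area_value (n : ℕ) (s : Fin n → ℕ)
    (hinj : Function.Injective (fun i : Fin n => s i + i + 1)) (B : ℕ → ℤ)
    (hB : ∀ t, B t = ∑ u ∈ Finset.Icc 1 t,
      (if ∃ i : Fin n, s i + (i : ℕ) + 1 = u then (-1 : ℤ) else 1)) (k : ℕ) (hk : k ≤ n)
    (hfil : (Finset.univ.filter fun i : Fin n => s i + i + 1 ≤ 2 * k)
      = Finset.univ.filter (fun i : Fin n => (i : ℕ) < k)) :
    subArea B k = (scorePartial n s k : ℚ) - (k.choose 2 : ℚ) := by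
  rw [LB_area_count n s hinj B hB k]
  have hsw := LB_swap n s (2 * k)
  have hcast : ∑ t ∈ Finset.Icc 1 (2*k),
      ((Finset.univ.filter fun i : Fin n => s i + i + 1 ≤ t).card : ℚ)
      = ((∑ t ∈ Finset.Icc 1 (2*k),
          (Finset.univ.filter fun i : Fin n => s i + i + 1 ≤ t).card : ℕ) : ℚ) := by
    push_cast; rfl
  rw [hcast, hsw, hfil, LB_map n k hk]
  rw [Finset.sum_map, Nat.cast_sum]
  have hterm : ∀ j : Fin k, ((2 * k + 1 - (s (Fin.castLEEmb hk j) + (Fin.castLEEmb hk j : ℕ) + 1) : ℕ) : ℚ)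
      = (2 * k : ℚ) + 1 - ((s (Fin.castLEEmb hk j) : ℚ) + (j : ℕ) + 1) := by
    intro j
    have hj : ((Fin.castLEEmb hk j : Fin n) : ℕ) = (j : ℕ) := rfl
    have hle : s (Fin.castLEEmb hk j) + (Fin.castLEEmb hk j : ℕ) + 1 ≤ 2 * k := by
      have : (Fin.castLEEmb hk j) ∈ Finset.univ.filter (fun i : Fin n => (i : ℕ) < k) := by
        simp only [Finset.mem_filter, Finset.mem_univ, true_and, hj]
        exact j.isLt
      rw [← hfil] at this
      simpa using this
    rw [hj] at hle ⊢
    rw [Nat.cast_sub (by omega : s (Fin.castLEEmb hk j) + (j:ℕ) + 1 ≤ 2*k+1)]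
    push_cast
    ring
  rw [Finset.sum_congr rfl (fun j _ => hterm j)]
  have hsplit : ∑ j : Fin k, ((2 * k : ℚ) + 1 - ((s (Fin.castLEEmb hk j) : ℚ) + (j : ℕ) + 1))
      = k * (2 * k + 1) - ((scorePartial n s k : ℚ) + k * (k+1)/2) := by
    rw [Finset.sum_sub_distrib, Finset.sum_const, Finset.card_univ, Fintype.card_fin]
    have h1 : ∑ j : Fin k, ((s (Fin.castLEEmb hk j) : ℚ) + ((j : ℕ) : ℚ) + 1)
        = (∑ j : Fin k, (s (Fin.castLEEmb hk j) : ℚ)) + ∑ j : Fin k, (((j : ℕ) : ℚ) + 1) := by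
      rw [← Finset.sum_add_distrib]
      apply Finset.sum_congr rfl; intro j _; ring
    rw [h1]
    have h2 : (scorePartial n s k : ℚ) = ∑ j : Fin k, (s (Fin.castLEEmb hk j) : ℚ) := by
      unfold scorePartial
      rw [LB_map n k hk, Finset.sum_map, Nat.cast_sum]
    have h3 : ∑ j : Fin k, (((j : ℕ) : ℚ) + 1) = k * (k+1)/2 := by
      rw [Fin.sum_univ_eq_sum_range (fun j => ((j : ℚ) + 1))]
      exact LB_sum_range_id k
    rw [h2, h3]
    push_cast
    ring
  rw [hsplit, Nat.cast_choose_two]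
  push_cast
  ring

/-- Landau's theorem, rephrased in terms of bridges:
a nondecreasing sequence `0 ≤ s₁ ≤ ⋯ ≤ sₙ ≤ n−1` is a score sequence iff its
associated bridge `B`, with down steps at times `dᵢ = sᵢ + i`, has sawtooth area `0`
and all its sub-bridges `B⁽²ᵏ⁾` with `B_{2k} = 0` have nonnegative sawtooth area. -/
theorem score_seq_iff_bridge (n : ℕ) (hn : 1 ≤ n) (s : Fin n → ℕ)
    (hmono : Monotone s) (hbd : ∀ i, s i ≤ n - 1) (B : ℕ → ℤ)
    (hB : ∀ t, B t = ∑ u ∈ Finset.Icc 1 t,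
      (if ∃ i : Fin n, s i + (i : ℕ) + 1 = u then (-1 : ℤ) else 1)) :
    ((∑ i, s i) = n.choose 2 ∧ ∀ k ≤ n, Nat.choose k 2 ≤ scorePartial n s k) ↔
      (subArea B n = 0 ∧
        ∀ k, 0 < k → k < n → B (2 * k) = 0 → 0 ≤ subArea B k) := by
  -- injectivity of i ↦ s i + i + 1
  have hinj : Function.Injective (fun i : Fin n => s i + i + 1) := by
    have hsm : StrictMono (fun i : Fin n => s i + i + 1) := by
      intro i j hij
      have h1 : s i ≤ s j := hmono (le_of_lt hij)
      have h2 : (i : ℕ) < (j : ℕ) := hij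
      simp only
      omega
    exact hsm.injective
  -- B(2k) = 0 ↔ count = k
  have hB2k : ∀ k : ℕ, (B (2 * k) = 0 ↔
      (Finset.univ.filter fun i : Fin n => s i + i + 1 ≤ 2 * k).card = k) := by
    intro k
    rw [LB_Bval n s hinj B hB (2 * k)]
    constructor
    · intro h; omega
    · intro h; rw [h]; push_cast; ring
  -- filter at n is everything
  have hfiln : (Finset.univ.filter fun i : Fin n => s i + i + 1 ≤ 2 * n)
      = Finset.univ.filter (fun i : Fin n => (i : ℕ) < n) := by
    ext i
    simp only [Finset.mem_filter, Finset.mem_univ, true_and]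
    have h1 := hbd i
    have h2 := i.isLt
    omega
  -- scorePartial at n is the total sum
  have hspn : scorePartial n s n = ∑ i, s i := by
    unfold scorePartial
    apply Finset.sum_congr _ (fun _ _ => rfl)
    ext i; simp [i.isLt]
  -- area at n
  have hAn : subArea B n = ((∑ i, s i : ℕ) : ℚ) - (n.choose 2 : ℚ) := by
    rw [LB_area_value n s hinj B hB n le_rfl hfiln, hspn]
  -- step quantities
  have hsp_step : ∀ k : ℕ, ∀ hkn : k < n,
      scorePartial n s (k + 1) = scorePartial n s k + s ⟨k, hkn⟩ := by
    intro k hkn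
    unfold scorePartial
    have : Finset.univ.filter (fun i : Fin n => (i : ℕ) < k + 1)
        = insert ⟨k, hkn⟩ (Finset.univ.filter (fun i : Fin n => (i : ℕ) < k)) := by
      ext i
      simp only [Finset.mem_filter, Finset.mem_univ, true_and, Finset.mem_insert, Fin.ext_iff]
      omega
    rw [this, Finset.sum_insert (by simp)]
    ring
  have hch_step : ∀ k : ℕ, (k + 1).choose 2 = k.choose 2 + k := by
    intro k
    rw [show (2:ℕ) = 1 + 1 from rfl, Nat.choose_succ_succ, Nat.choose_one_right]
    norm_num
    omega
  constructor
  · rintro ⟨hsum, hpart⟩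
    constructor
    · rw [hAn, hsum]; ring
    · intro k hk0 hkn hBk
      have hcard := (hB2k k).mp hBk
      have hfil := LB_lowerset n s hmono k (le_of_lt hkn) (2 * k) hcard
      rw [LB_area_value n s hinj B hB k (le_of_lt hkn) hfil]
      have hle := hpart k (le_of_lt hkn)
      have hle' : ((k.choose 2 : ℕ) : ℚ) ≤ ((scorePartial n s k : ℕ) : ℚ) := Nat.cast_le.mpr hle
      linarith
  · rintro ⟨hA0, hAk⟩
    have hsum : (∑ i, s i) = n.choose 2 := by
      rw [hAn] at hA0
      have : ((∑ i, s i : ℕ) : ℚ) = (n.choose 2 : ℚ) := by linarith [sub_eq_zero.mp hA0]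
      exact_mod_cast this
    refine ⟨hsum, ?_⟩
    -- minimizer argument
    set f : ℕ → ℤ := fun k => (scorePartial n s k : ℤ) - (k.choose 2 : ℤ) with hf
    have hf0 : f 0 = 0 := by
      simp [hf, scorePartial]
    have hfn : f n = 0 := by
      simp only [hf, hspn, hsum, sub_self]
    have hfstep : ∀ k : ℕ, ∀ hkn : k < n, f (k + 1) - f k = (s ⟨k, hkn⟩ : ℤ) - k := by
      intro k hkn
      simp only [hf, hsp_step k hkn, hch_step k]
      push_cast
      ring
    obtain ⟨k₀, hk₀mem, hk₀min⟩ := Finset.exists_min_image (Finset.Icc 0 n) f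
      ⟨0, by simp⟩
    have hk₀n : k₀ ≤ n := by simpa using hk₀mem
    suffices hpos : 0 ≤ f k₀ by
      intro k hk
      have := hk₀min k (by simp [hk])
      have h2 : 0 ≤ f k := le_trans hpos this
      simp only [hf, sub_nonneg] at h2
      exact_mod_cast h2
    by_contra hneg
    push_neg at hneg
    have hk₀0 : k₀ ≠ 0 := fun h => by rw [h, hf0] at hneg; omega
    have hk₀nn : k₀ ≠ n := fun h => by rw [h, hfn] at hneg; omega
    have hk₀pos : 0 < k₀ := Nat.pos_of_ne_zero hk₀0
    have hk₀lt : k₀ < n := lt_of_le_of_ne hk₀n hk₀nn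
    -- neighbors
    have hm1 : k₀ - 1 < n := by omega
    have hle1 : f k₀ ≤ f (k₀ - 1) := hk₀min (k₀ - 1) (by simp; omega)
    have hle2 : f k₀ ≤ f (k₀ + 1) := hk₀min (k₀ + 1) (by simp; omega)
    have hd1 : f (k₀ - 1 + 1) - f (k₀ - 1) = (s ⟨k₀ - 1, hm1⟩ : ℤ) - (k₀ - 1 : ℕ) :=
      hfstep (k₀ - 1) hm1
    have he1 : k₀ - 1 + 1 = k₀ := by omega
    rw [he1] at hd1
    have hs1 : (s ⟨k₀ - 1, hm1⟩ : ℕ) ≤ k₀ - 1 := by omega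
    have hd2 : f (k₀ + 1) - f k₀ = (s ⟨k₀, hk₀lt⟩ : ℤ) - k₀ := hfstep k₀ hk₀lt
    have hs2 : k₀ ≤ s ⟨k₀, hk₀lt⟩ := by omega
    -- the filter equality at k₀
    have hfil : (Finset.univ.filter fun i : Fin n => s i + i + 1 ≤ 2 * k₀)
        = Finset.univ.filter (fun i : Fin n => (i : ℕ) < k₀) := by
      ext i
      simp only [Finset.mem_filter, Finset.mem_univ, true_and]
      constructor
      · intro h
        by_contra hik
        push_neg at hik
        have : s ⟨k₀, hk₀lt⟩ ≤ s i := hmono (by exact hik)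
        omega
      · intro h
        have hle : (i : ℕ) ≤ k₀ - 1 := by omega
        have : s i ≤ s ⟨k₀ - 1, hm1⟩ := hmono (by exact hle)
        omega
    have hBz : B (2 * k₀) = 0 := by
      rw [hB2k k₀, hfil]
      exact LB_card_lt n k₀ (le_of_lt hk₀lt)
    have := hAk k₀ hk₀pos hk₀lt hBz
    rw [LB_area_value n s hinj B hB k₀ (le_of_lt hk₀lt) hfil] at this
    have hq : (f k₀ : ℚ) = (scorePartial n s k₀ : ℚ) - (k₀.choose 2 : ℚ) := by
      simp [hf]
    rw [← hq] at this
    have : (0 : ℤ) ≤ f k₀ := by exact_mod_cast this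
    omega
end

section
/- (Cycle lemma / Raney) For any bridge B of length 2n with a(B) = 0, there exists a cyclic shift m ∈ {0, …, 2n−1} such that the bridge B' obtained by cyclically shifting the increments of B to the left by m corresponds to a score sequence, i.e., satisfies a(B'^{(2k)}) ≥ 0 for all 0 < k ≤ n with B'_{2k} = 0 and a(B') = 0. -/
open Finset

lemma abel_sum (z : ℕ → ℚ) (L : ℕ) :
    ∑ t ∈ Finset.Icc 1 L, ((L : ℚ) + 1 - t) * z t
      = ∑ j ∈ Finset.Icc 1 L, ∑ t ∈ Finset.Icc 1 j, z t := by
  induction L with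
  | zero => simp
  | succ L ih =>
    have hL : ∑ t ∈ Finset.Icc 1 (L + 1), ((L : ℚ) + 1 - t) * z t
        = ∑ t ∈ Finset.Icc 1 L, ((L : ℚ) + 1 - t) * z t := by
      rw [Finset.sum_Icc_succ_top (by omega : 1 ≤ L + 1)]
      have : ((L : ℚ) + 1 - (↑(L + 1) : ℚ)) * z (L + 1) = 0 := by push_cast; ring
      rw [this, add_zero]
    calc ∑ t ∈ Finset.Icc 1 (L + 1), ((↑(L + 1) : ℚ) + 1 - t) * z t
        = ∑ t ∈ Finset.Icc 1 (L + 1), (((L : ℚ) + 1 - t) * z t + z t) := by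
          apply Finset.sum_congr rfl; intro t _; push_cast; ring
      _ = ∑ t ∈ Finset.Icc 1 (L + 1), ((L : ℚ) + 1 - t) * z t
            + ∑ t ∈ Finset.Icc 1 (L + 1), z t := Finset.sum_add_distrib
      _ = ∑ j ∈ Finset.Icc 1 L, (∑ t ∈ Finset.Icc 1 j, z t)
            + ∑ t ∈ Finset.Icc 1 (L + 1), z t := by rw [hL, ih]
      _ = ∑ j ∈ Finset.Icc 1 (L + 1), ∑ t ∈ Finset.Icc 1 j, z t := by
          rw [Finset.sum_Icc_succ_top (by omega : 1 ≤ L + 1)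
            (fun j => ∑ t ∈ Finset.Icc 1 j, z t)]

lemma sum_shift {M : Type*} [AddCommMonoid M] (f : ℕ → M) (m : ℕ) :
    ∀ j : ℕ, ∑ t ∈ Finset.Icc 1 j, f (t + m) = ∑ t ∈ Finset.Ioc m (m + j), f t := by
  intro j
  induction j with
  | zero => simp
  | succ j ih =>
    rw [Finset.sum_Icc_succ_top (by omega : 1 ≤ j + 1), ih]
    have h : m + (j + 1) = (m + j) + 1 := by omega
    rw [h, Finset.sum_Ioc_succ_top (by omega : m ≤ m + j)]
    congr 2
    omega

lemma periodic_window_sum {M : Type*} [AddCommGroup M] (f : ℕ → M) (p : ℕ)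
    (hf : ∀ t, 1 ≤ t → f (t + p) = f t) :
    ∀ j : ℕ, ∑ t ∈ Finset.Ioc j (j + p), f t = ∑ t ∈ Finset.Ioc 0 p, f t := by
  intro j
  induction j with
  | zero => simp
  | succ j ih =>
    have h1 : ∑ t ∈ Finset.Ioc j (j + 1), f t + ∑ t ∈ Finset.Ioc (j + 1) (j + 1 + p), f t
        = ∑ t ∈ Finset.Ioc j (j + 1 + p), f t :=
      Finset.sum_Ioc_consecutive f (by omega) (by omega)
    have h2 : j + 1 + p = (j + p) + 1 := by omega
    have h3 : ∑ t ∈ Finset.Ioc j (j + 1 + p), f t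
        = ∑ t ∈ Finset.Ioc j (j + p), f t + f (j + p + 1) := by
      rw [h2, Finset.sum_Ioc_succ_top (by omega : j ≤ j + p)]
    have h4 : Finset.Ioc j (j + 1) = {j + 1} := by
      ext t; simp only [Finset.mem_Ioc, Finset.mem_singleton]; omega
    have h5 : f (j + p + 1) = f (j + 1) := by
      have h : j + p + 1 = (j + 1) + p := by omega
      rw [h, hf (j + 1) (by omega)]
    rw [h4, Finset.sum_singleton, h3, h5] at h1
    have h6 : ∑ t ∈ Finset.Ioc (j + 1) (j + 1 + p), f t
        = ∑ t ∈ Finset.Ioc j (j + p), f t :=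
      add_left_cancel (h1.trans (add_comm _ _))
    rw [h6, ih]

/-- The sawtooth area of the walk of length `2k` with increment sequence
`x 1, x 2, …`: `(1/2)[k + ∑_{t=1}^{2k} (2k+1−t)·x_t]`. -/
noncomputable def incArea (x : ℕ → ℤ) (k : ℕ) : ℚ :=
  (1 / 2 : ℚ) * ((k : ℚ) + ∑ t ∈ Finset.Icc 1 (2 * k), ((2 * k + 1 : ℚ) - t) * (x t : ℚ))

/-- The increments cyclically shifted to the left by `m` (within positions `1,…,2n`). -/
def cycShift (n m : ℕ) (x : ℕ → ℤ) : ℕ → ℤ :=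
  fun t => x ((t - 1 + m) % (2 * n) + 1)

/-- Cycle lemma (Raney/Kleitman): every bridge of length `2n` with sawtooth area `0`
has a cyclic shift corresponding to a score sequence: the shifted bridge has sawtooth
area `0` and every sub-bridge returning to `0` has nonnegative sawtooth area. -/
theorem cycle_lemma (n : ℕ) (hn : 1 ≤ n) (x : ℕ → ℤ)
    (hpm : ∀ t, 1 ≤ t → t ≤ 2 * n → x t = 1 ∨ x t = -1)
    (hbridge : (∑ t ∈ Finset.Icc 1 (2 * n), x t) = 0)
    (harea : incArea x n = 0) :
    ∃ m < 2 * n,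
      incArea (cycShift n m x) n = 0 ∧
      ∀ k, 0 < k → k ≤ n → (∑ t ∈ Finset.Icc 1 (2 * k), cycShift n m x t) = 0 →
        0 ≤ incArea (cycShift n m x) k := by
  classical
  -- periodic extension of the increments
  set y : ℕ → ℤ := fun t => x ((t - 1) % (2 * n) + 1) with hy
  have hI : ∀ i : ℕ, Finset.Ioc 0 i = Finset.Icc 1 i := by
    intro i; ext t; simp only [Finset.mem_Ioc, Finset.mem_Icc]; omega
  have hcy : ∀ m t, 1 ≤ t → cycShift n m x t = y (t + m) := by
    intro m t ht
    show x ((t - 1 + m) % (2 * n) + 1) = x ((t + m - 1) % (2 * n) + 1)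
    have e : t - 1 + m = t + m - 1 := by omega
    rw [e]
  have hyx : ∀ t, 1 ≤ t → t ≤ 2 * n → y t = x t := by
    intro t h1 h2
    show x ((t - 1) % (2 * n) + 1) = x t
    rw [Nat.mod_eq_of_lt (by omega)]
    congr 1; omega
  have hyper : ∀ t, 1 ≤ t → y (t + 2 * n) = y t := by
    intro t ht
    show x ((t + 2 * n - 1) % (2 * n) + 1) = x ((t - 1) % (2 * n) + 1)
    have e : t + 2 * n - 1 = (t - 1) + 2 * n := by omega
    rw [e, Nat.add_mod_right]
  -- partial sums
  set B : ℕ → ℤ := fun j => ∑ t ∈ Finset.Icc 1 j, y t with hBdef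
  have hB0 : B 0 = 0 := by simp [hBdef]
  have hysum : ∑ t ∈ Finset.Icc 1 (2 * n), y t = 0 := by
    have e : ∑ t ∈ Finset.Icc 1 (2 * n), y t = ∑ t ∈ Finset.Icc 1 (2 * n), x t :=
      Finset.sum_congr rfl fun t ht => by
        rw [Finset.mem_Icc] at ht; exact hyx t ht.1 ht.2
    rw [e]; exact hbridge
  have hwin : ∀ j, ∑ t ∈ Finset.Ioc j (j + 2 * n), y t = 0 := by
    intro j
    rw [periodic_window_sum y (2 * n) hyper j, hI, hysum]
  have hBper : ∀ j, B (j + 2 * n) = B j := by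
    intro j
    have h := Finset.sum_Ioc_consecutive y (Nat.zero_le j) (by omega : j ≤ j + 2 * n)
    rw [hI, hI, hwin j] at h
    simpa [hBdef] using h.symm
  -- total signed area condition
  have harea' : ∑ j ∈ Finset.Icc 1 (2 * n), ((B j : ℤ) : ℚ) = -(n : ℚ) := by
    have h0 : (1 / 2 : ℚ) * ((n : ℚ)
        + ∑ t ∈ Finset.Icc 1 (2 * n), ((2 * (n : ℚ) + 1) - t) * ((x t : ℤ) : ℚ)) = 0 := harea
    have hS : ∑ t ∈ Finset.Icc 1 (2 * n), ((2 * (n : ℚ) + 1) - t) * ((x t : ℤ) : ℚ)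
        = -(n : ℚ) := by
      have := h0
      field_simp at this
      linarith
    have h1 : ∑ t ∈ Finset.Icc 1 (2 * n), ((2 * (n : ℚ) + 1) - t) * ((x t : ℤ) : ℚ)
        = ∑ t ∈ Finset.Icc 1 (2 * n), (((2 * n : ℕ) : ℚ) + 1 - t) * ((y t : ℤ) : ℚ) := by
      apply Finset.sum_congr rfl
      intro t ht
      rw [Finset.mem_Icc] at ht
      rw [hyx t ht.1 ht.2]
      push_cast; ring
    have h2 := abel_sum (fun t => ((y t : ℤ) : ℚ)) (2 * n)
    rw [h1, h2] at hS
    rw [← hS]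
    apply Finset.sum_congr rfl
    intro j _
    rw [hBdef]
    push_cast
    rfl
  -- the area-prefix function
  set Aq : ℕ → ℚ := fun j => ∑ i ∈ Finset.Icc 1 j, (((B i : ℤ) : ℚ) + 1 / 2) with hAdef
  have hA0 : Aq 0 = 0 := by simp [hAdef]
  have hAzero : ∑ i ∈ Finset.Ioc 0 (2 * n), (((B i : ℤ) : ℚ) + 1 / 2) = 0 := by
    rw [hI, Finset.sum_add_distrib, harea', Finset.sum_const, Nat.card_Icc, nsmul_eq_mul]
    have hc : (2 * n + 1 - 1 : ℕ) = 2 * n := by omega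
    rw [hc]
    push_cast
    ring
  have hAper : ∀ j, Aq (j + 2 * n) = Aq j := by
    intro j
    have hfper : ∀ t, 1 ≤ t → (((B (t + 2 * n) : ℤ) : ℚ) + 1 / 2)
        = (((B t : ℤ) : ℚ) + 1 / 2) := by
      intro t _; rw [hBper]
    have h := Finset.sum_Ioc_consecutive (fun i => ((B i : ℤ) : ℚ) + 1 / 2)
      (Nat.zero_le j) (by omega : j ≤ j + 2 * n)
    have hw := periodic_window_sum (fun i => ((B i : ℤ) : ℚ) + 1 / 2) (2 * n) hfper j
    rw [hw, hAzero] at h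
    rw [hI, hI] at h
    have hAj : ∑ t ∈ Finset.Icc 1 j, (((B t : ℤ) : ℚ) + 1 / 2) = Aq j := rfl
    have hAj2 : ∑ t ∈ Finset.Icc 1 (j + 2 * n), (((B t : ℤ) : ℚ) + 1 / 2) = Aq (j + 2 * n) := rfl
    rw [hAj, hAj2] at h
    linarith
  -- partial sums of the shifted sequence
  have hinner : ∀ m j, ∑ t ∈ Finset.Icc 1 j, y (t + m) = B (m + j) - B m := by
    intro m j
    rw [sum_shift y m j]
    have h := Finset.sum_Ioc_consecutive y (Nat.zero_le m) (by omega : m ≤ m + j)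
    rw [hI, hI] at h
    have e1 : ∑ t ∈ Finset.Icc 1 m, y t = B m := rfl
    have e2 : ∑ t ∈ Finset.Icc 1 (m + j), y t = B (m + j) := rfl
    rw [e1, e2] at h
    omega
  -- key formula for the area of the shifted walk
  have key : ∀ m k, incArea (cycShift n m x) k
      = (Aq (m + 2 * k) - Aq m - 2 * (k : ℚ) * ((B m : ℤ) : ℚ)) / 2 := by
    intro m k
    have h2 : ∀ j, ∑ t ∈ Finset.Icc 1 j, ((y (t + m) : ℤ) : ℚ)
        = ((B (m + j) : ℤ) : ℚ) - ((B m : ℤ) : ℚ) := by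
      intro j
      rw [← Int.cast_sub, ← hinner m j]
      push_cast
      rfl
    have h3 : ∑ j ∈ Finset.Icc 1 (2 * k), (((B (m + j) : ℤ) : ℚ) + 1 / 2)
        = Aq (m + 2 * k) - Aq m := by
      have hs := sum_shift (fun i => ((B i : ℤ) : ℚ) + 1 / 2) m (2 * k)
      have hc := Finset.sum_Ioc_consecutive (fun i => ((B i : ℤ) : ℚ) + 1 / 2)
        (Nat.zero_le m) (by omega : m ≤ m + 2 * k)
      rw [hI, hI] at hc
      have e1 : ∑ t ∈ Finset.Icc 1 m, (((B t : ℤ) : ℚ) + 1 / 2) = Aq m := rfl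
      have e2 : ∑ t ∈ Finset.Icc 1 (m + 2 * k), (((B t : ℤ) : ℚ) + 1 / 2)
          = Aq (m + 2 * k) := rfl
      rw [e1, e2] at hc
      have hcomm : ∑ j ∈ Finset.Icc 1 (2 * k), (((B (m + j) : ℤ) : ℚ) + 1 / 2)
          = ∑ t ∈ Finset.Icc 1 (2 * k), (((B (t + m) : ℤ) : ℚ) + 1 / 2) := by
        apply Finset.sum_congr rfl; intro t _; rw [Nat.add_comm]
      rw [hcomm, hs]
      linarith
    have h4 : ∑ j ∈ Finset.Icc 1 (2 * k), (((B (m + j) : ℤ) : ℚ) - ((B m : ℤ) : ℚ))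
        = Aq (m + 2 * k) - Aq m - (k : ℚ) - 2 * (k : ℚ) * ((B m : ℤ) : ℚ) := by
      have : ∑ j ∈ Finset.Icc 1 (2 * k), (((B (m + j) : ℤ) : ℚ) - ((B m : ℤ) : ℚ))
          = ∑ j ∈ Finset.Icc 1 (2 * k), ((((B (m + j) : ℤ) : ℚ) + 1 / 2)
              - (1 / 2 + ((B m : ℤ) : ℚ))) := by
        apply Finset.sum_congr rfl; intro j _; ring
      rw [this, Finset.sum_sub_distrib, h3, Finset.sum_const, Nat.card_Icc, nsmul_eq_mul]
      have hc : (2 * k + 1 - 1 : ℕ) = 2 * k := by omega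
      rw [hc]
      push_cast
      ring
    have h1 : ∑ t ∈ Finset.Icc 1 (2 * k), ((2 * (k : ℚ) + 1) - t) * ((cycShift n m x t : ℤ) : ℚ)
        = Aq (m + 2 * k) - Aq m - (k : ℚ) - 2 * (k : ℚ) * ((B m : ℤ) : ℚ) := by
      calc ∑ t ∈ Finset.Icc 1 (2 * k), ((2 * (k : ℚ) + 1) - t) * ((cycShift n m x t : ℤ) : ℚ)
          = ∑ t ∈ Finset.Icc 1 (2 * k), (((2 * k : ℕ) : ℚ) + 1 - t) * ((y (t + m) : ℤ) : ℚ) := by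
            apply Finset.sum_congr rfl
            intro t ht
            rw [Finset.mem_Icc] at ht
            rw [hcy m t ht.1]
            push_cast; ring
        _ = ∑ j ∈ Finset.Icc 1 (2 * k), ∑ t ∈ Finset.Icc 1 j, ((y (t + m) : ℤ) : ℚ) :=
            abel_sum (fun t => ((y (t + m) : ℤ) : ℚ)) (2 * k)
        _ = ∑ j ∈ Finset.Icc 1 (2 * k), (((B (m + j) : ℤ) : ℚ) - ((B m : ℤ) : ℚ)) := by
            apply Finset.sum_congr rfl; intro j _; exact h2 j
        _ = Aq (m + 2 * k) - Aq m - (k : ℚ) - 2 * (k : ℚ) * ((B m : ℤ) : ℚ) := h4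
    show (1 / 2 : ℚ) * ((k : ℚ)
        + ∑ t ∈ Finset.Icc 1 (2 * k), ((2 * (k : ℚ) + 1) - t) * ((cycShift n m x t : ℤ) : ℚ))
      = (Aq (m + 2 * k) - Aq m - 2 * (k : ℚ) * ((B m : ℤ) : ℚ)) / 2
    rw [h1]
    ring
  -- sub-bridge partial sum formula
  have hsub : ∀ m k, ∑ t ∈ Finset.Icc 1 (2 * k), cycShift n m x t = B (m + 2 * k) - B m := by
    intro m k
    have e : ∑ t ∈ Finset.Icc 1 (2 * k), cycShift n m x t
        = ∑ t ∈ Finset.Icc 1 (2 * k), y (t + m) :=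
      Finset.sum_congr rfl fun t ht => by
        rw [Finset.mem_Icc] at ht; exact hcy m t ht.1
    rw [e]; exact hinner m (2 * k)
  -- choose the minimizing shift
  obtain ⟨m, hmZ, hmin⟩ := Finset.exists_min_image
    ((Finset.range (2 * n)).filter (fun j => B j = 0)) Aq
    ⟨0, Finset.mem_filter.mpr ⟨Finset.mem_range.mpr (by omega), hB0⟩⟩
  have hm1 : m < 2 * n := Finset.mem_range.mp (Finset.mem_filter.mp hmZ).1
  have hBm : B m = 0 := (Finset.mem_filter.mp hmZ).2
  refine ⟨m, hm1, ?_, ?_⟩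
  · rw [key m n, hAper m, hBm]
    push_cast
    ring
  · intro k hk hkn hsum0
    have hBmk : B (m + 2 * k) = 0 := by
      rw [hsub m k] at hsum0
      omega
    have hA : Aq m ≤ Aq (m + 2 * k) := by
      by_cases hcase : m + 2 * k < 2 * n
      · exact hmin _ (Finset.mem_filter.mpr ⟨Finset.mem_range.mpr hcase, hBmk⟩)
      · have hr : m + 2 * k = (m + 2 * k - 2 * n) + 2 * n := by omega
        have hrlt : m + 2 * k - 2 * n < 2 * n := by omega
        have hBr : B (m + 2 * k - 2 * n) = 0 := by
          rw [← hBper (m + 2 * k - 2 * n), ← hr]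
          exact hBmk
        have hle := hmin _ (Finset.mem_filter.mpr ⟨Finset.mem_range.mpr hrlt, hBr⟩)
        rw [hr, hAper]
        exact hle
    rw [key m k, hBm]
    push_cast
    linarith
end

section
/- There is a bijection between the set of pairs (B, m), where B is a bridge of length 2n corresponding to a score sequence of length n and 0 ≤ m < 2ℓ(B) with 2ℓ(B) the length of the first irreducible part of B, and the set of bridges B' of length 2n whose sawtooth area satisfies a(B') ≡ 0 (mod n). The bijection sends (B, m) to the cyclic left shift of B's increments by m. Consequently, ∑_B 2ℓ(B) = 2Nₙ, where the sum is over score-sequence bridges B. -/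
/-- `D` is the down-step set of a bridge of length `2n` corresponding to a score
sequence: the sawtooth area `−n² + ∑D` is `0`, and every sub-bridge `B⁽²ᵏ⁾`
with `B_{2k} = 0` (i.e. exactly `k` down steps among `{1,…,2k}`) has nonnegative
sawtooth area `−k² + ∑(D ∩ {1,…,2k})`. -/
def IsScoreBridge (n : ℕ) (D : Finset ℕ) : Prop :=
  D ⊆ Finset.Icc 1 (2 * n) ∧ D.card = n ∧ (∑ d ∈ D, d) = n ^ 2 ∧
    ∀ k, 0 < k → k < n → (D ∩ Finset.Icc 1 (2 * k)).card = k →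
      k ^ 2 ≤ ∑ d ∈ D ∩ Finset.Icc 1 (2 * k), d

/-- `ℓ(B)`: half the length of the first irreducible part of the score-sequence
bridge with down-step set `D`; the least `k > 0` with `B_{2k} = 0` and
`a(B⁽²ᵏ⁾) = 0`. -/
noncomputable def firstIrr (n : ℕ) (D : Finset ℕ) : ℕ :=
  sInf {k | 0 < k ∧ (D ∩ Finset.Icc 1 (2 * k)).card = k ∧
    (∑ d ∈ D ∩ Finset.Icc 1 (2 * k), d) = k ^ 2}

/-- Cyclically shifting the down-step times to the left by `m`. -/
def shiftDown (n m : ℕ) (D : Finset ℕ) : Finset ℕ :=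
  D.image (fun d => (d + 2 * n - m - 1) % (2 * n) + 1)

namespace SB
open Finset

variable {n : ℕ} {D : Finset ℕ}

def cc (n : ℕ) (D : Finset ℕ) (x : ℕ) : ℕ :=
  (D ∩ Finset.Icc 1 x).card + (D ∩ Finset.Icc 1 (x - 2*n)).card
def ssum (n : ℕ) (D : Finset ℕ) (x : ℕ) : ℕ :=
  (∑ d ∈ D ∩ Finset.Icc 1 x, d) + (∑ d ∈ D ∩ Finset.Icc 1 (x - 2*n), d)
  + 2*n*(D ∩ Finset.Icc 1 (x - 2*n)).card
def Ht (n : ℕ) (D : Finset ℕ) (x : ℕ) : ℤ := (x : ℤ) - 2 * cc n D x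
def tP (n : ℕ) (D : Finset ℕ) (h : ℤ) (x : ℕ) : ℤ :=
  (ssum n D x : ℤ) - (cc n D x : ℤ)^2 - h * (cc n D x)

lemma inter_all (hD : D ⊆ Finset.Icc 1 (2*n)) {x : ℕ} (hx : 2*n ≤ x) :
    D ∩ Finset.Icc 1 x = D := by
  apply Finset.inter_eq_left.mpr
  intro d hd
  have := hD hd
  simp only [mem_Icc] at this ⊢
  omega

lemma inter_split {a b : ℕ} (h : a ≤ b) :
    D ∩ Finset.Icc 1 b = (D ∩ Finset.Icc 1 a) ∪ (D ∩ Finset.Icc (a+1) b) := by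
  ext d
  by_cases hd : d ∈ D <;> simp [mem_inter, mem_Icc, hd] <;> omega

lemma inter_disj {a b : ℕ} :
    Disjoint (D ∩ Finset.Icc 1 a) (D ∩ Finset.Icc (a+1) b) := by
  apply Finset.disjoint_left.mpr
  intro d h1 h2
  simp [mem_inter, mem_Icc] at h1 h2
  omega

lemma card_split {a b : ℕ} (h : a ≤ b) :
    (D ∩ Finset.Icc 1 b).card = (D ∩ Finset.Icc 1 a).card + (D ∩ Finset.Icc (a+1) b).card := by
  rw [inter_split h, card_union_of_disjoint inter_disj]

lemma sum_split {a b : ℕ} (h : a ≤ b) :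
    (∑ d ∈ D ∩ Finset.Icc 1 b, d)
      = (∑ d ∈ D ∩ Finset.Icc 1 a, d) + ∑ d ∈ D ∩ Finset.Icc (a+1) b, d := by
  rw [inter_split h, sum_union inter_disj]

lemma cc_of_le {x : ℕ} (hx : x ≤ 2*n) : cc n D x = (D ∩ Finset.Icc 1 x).card := by
  unfold cc
  have : x - 2*n = 0 := by omega
  simp [this]

lemma ssum_of_le {x : ℕ} (hx : x ≤ 2*n) : ssum n D x = ∑ d ∈ D ∩ Finset.Icc 1 x, d := by
  unfold ssum
  have : x - 2*n = 0 := by omega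
  simp [this]

lemma cc_add (hD : D ⊆ Finset.Icc 1 (2*n)) (hc : D.card = n) {x : ℕ} (hx : x ≤ 2*n) :
    cc n D (x + 2*n) = n + cc n D x := by
  unfold cc
  have h1 : x + 2*n - 2*n = x := by omega
  have h2 : x - 2*n = 0 := by omega
  rw [h1, h2, inter_all hD (by omega)]
  simp [hc]

lemma ssum_add (hD : D ⊆ Finset.Icc 1 (2*n)) (hc : D.card = n) {x : ℕ} (hx : x ≤ 2*n) :
    ssum n D (x + 2*n) = (∑ d ∈ D, d) + ssum n D x + 2*n * cc n D x := by
  unfold ssum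
  have h1 : x + 2*n - 2*n = x := by omega
  have h2 : x - 2*n = 0 := by omega
  rw [h1, h2, inter_all hD (by omega), cc_of_le hx]
  simp
  try ring

lemma card_inter_succ (s : Finset ℕ) (y : ℕ) :
    (s ∩ Finset.Icc 1 (y+1)).card = (s ∩ Finset.Icc 1 y).card ∨
    (s ∩ Finset.Icc 1 (y+1)).card = (s ∩ Finset.Icc 1 y).card + 1 := by
  have h := card_split (D := s) (a := y) (b := y+1) (by omega)
  have h2 : (s ∩ Finset.Icc (y+1) (y+1)).card ≤ 1 := by
    calc (s ∩ Finset.Icc (y+1) (y+1)).card ≤ (Finset.Icc (y+1) (y+1)).card :=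
          card_le_card (inter_subset_right)
    _ = 1 := by simp
  omega

lemma cc_succ (hD : D ⊆ Finset.Icc 1 (2*n)) (x : ℕ) :
    cc n D (x+1) = cc n D x ∨ cc n D (x+1) = cc n D x + 1 := by
  unfold cc
  rcases le_or_gt (x+1) (2*n) with h | h
  · have h1 : x + 1 - 2*n = 0 := by omega
    have h2 : x - 2*n = 0 := by omega
    rw [h1, h2]
    rcases card_inter_succ D x with h3 | h3 <;> simp [h3] <;> omega
  · have h1 : x + 1 - 2*n = (x - 2*n) + 1 := by omega
    have h2 : D ∩ Finset.Icc 1 (x+1) = D := inter_all hD (by omega)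
    have h3 : D ∩ Finset.Icc 1 x = D := inter_all hD (by omega)
    rw [h1, h2, h3]
    rcases card_inter_succ D (x - 2*n) with h4 | h4 <;> simp [h4] <;> omega

lemma cc_mono (hD : D ⊆ Finset.Icc 1 (2*n)) {x y : ℕ} (h : x ≤ y) : cc n D x ≤ cc n D y := by
  induction y with
  | zero =>
    have : x = 0 := by omega
    simp [this]
  | succ k ih =>
    rcases Nat.lt_or_ge x (k+1) with h' | h'
    · have := ih (by omega)
      rcases cc_succ hD k with h2 | h2 <;> omega
    · have hx : x = k + 1 := by omega
      rw [hx]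




lemma shiftVal {j d : ℕ} (hj : j < 2*n) (hd1 : 1 ≤ d) (hd2 : d ≤ 2*n) :
    (d + 2*n - j - 1) % (2*n) + 1 = if j < d then d - j else d + 2*n - j := by
  rcases lt_or_ge j d with h | h
  · rw [if_pos h]
    have e : d + 2*n - j - 1 = 2*n + (d - j - 1) := by omega
    rw [e, Nat.add_mod_left, Nat.mod_eq_of_lt (by omega)]
    omega
  · rw [if_neg (by omega), Nat.mod_eq_of_lt (by omega)]
    omega

lemma shift_subset (hn : 1 ≤ n) (m : ℕ) : shiftDown n m D ⊆ Finset.Icc 1 (2*n) := by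
  intro a ha
  simp only [shiftDown, mem_image] at ha
  obtain ⟨d, _, rfl⟩ := ha
  have : (d + 2*n - m - 1) % (2*n) < 2*n := Nat.mod_lt _ (by omega)
  simp only [mem_Icc]
  omega

lemma shift_zero (hD : D ⊆ Finset.Icc 1 (2*n)) : shiftDown n 0 D = D := by
  have : ∀ d ∈ D, (d + 2*n - 0 - 1) % (2*n) + 1 = d := by
    intro d hd
    have hd' := hD hd
    simp only [mem_Icc] at hd'
    have h2n : 1 ≤ 2*n := by omega
    rw [shiftVal (by omega) hd'.1 hd'.2, if_pos (by omega)]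
    omega
  calc shiftDown n 0 D = D.image id := Finset.image_congr (fun d hd => this d hd)
  _ = D := Finset.image_id

lemma shift_comp (hD : D ⊆ Finset.Icc 1 (2*n)) {m j : ℕ} (hm : m < 2*n) (hj : j < 2*n) :
    shiftDown n m (shiftDown n j D) = shiftDown n ((m + j) % (2*n)) D := by
  unfold shiftDown
  rw [Finset.image_image]
  apply Finset.image_congr
  intro d hd
  have hd' := hD hd
  simp only [mem_Icc] at hd'
  have hd1 : 1 ≤ d := hd'.1
  simp only [Function.comp_apply]
  set q := (m + j) % (2*n) with hq
  have hqlt : q < 2*n := Nat.mod_lt _ (by omega)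
  have e1 : (d + 2*n - j - 1) % (2*n) + 1 + 2*n - m - 1
      = (d + 2*n - j - 1) % (2*n) + (2*n - m) := by omega
  rw [e1]
  have e2 : ((d + 2*n - j - 1) % (2*n) + (2*n - m)) % (2*n)
      = ((d + 2*n - j - 1) + (2*n - m)) % (2*n) :=
    Nat.ModEq.add_right (2*n - m) (Nat.mod_modEq _ _)
  rw [e2]
  have e3 : (d + 2*n - j - 1) + (2*n - m) = d + 4*n - j - m - 1 := by omega
  rw [e3]
  congr 1
  rcases lt_or_ge (m + j) (2*n) with h | h
  · have hq' : q = m + j := by rw [hq, Nat.mod_eq_of_lt h]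
    rw [show d + 4*n - j - m - 1 = (d + 2*n - q - 1) + 2*n from by omega]
    exact Nat.add_mod_right _ _
  · have hq' : q = m + j - 2*n := by
      rw [hq, show m + j = (m + j - 2*n) + 2*n from by omega, Nat.add_mod_right,
        Nat.mod_eq_of_lt (by omega)]
      omega
    rw [show d + 4*n - j - m - 1 = d + 2*n - q - 1 from by omega]


lemma rot_inter (hn : 1 ≤ n) (hD : D ⊆ Finset.Icc 1 (2*n)) {j y : ℕ}
    (hj : j < 2*n) (hy : y ≤ 2*n) :
    shiftDown n j D ∩ Finset.Icc 1 y =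
      ((D ∩ Finset.Icc (j+1) (j+y)).image (fun d => d - j)) ∪
      ((D ∩ Finset.Icc 1 (j + y - 2*n)).image (fun d => d + (2*n - j))) := by
  ext a
  simp only [mem_inter, mem_union, mem_image, shiftDown, mem_Icc]
  constructor
  · rintro ⟨⟨d, hdD, hfd⟩, h1a, hay⟩
    have hd' := hD hdD
    simp only [mem_Icc] at hd'
    rw [shiftVal hj hd'.1 hd'.2] at hfd
    split_ifs at hfd with hjd
    · left
      exact ⟨d, ⟨hdD, by omega, by omega⟩, by omega⟩
    · right
      exact ⟨d, ⟨hdD, by omega, by omega⟩, by omega⟩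
  · rintro (⟨d, ⟨hdD, hd1, hd2⟩, rfl⟩ | ⟨d, ⟨hdD, hd1, hd2⟩, rfl⟩)
    · have hd' := hD hdD
      simp only [mem_Icc] at hd'
      refine ⟨⟨d, hdD, ?_⟩, by omega, by omega⟩
      rw [shiftVal hj hd'.1 hd'.2, if_pos (by omega)]
    · have hd' := hD hdD
      simp only [mem_Icc] at hd'
      refine ⟨⟨d, hdD, ?_⟩, by omega, by omega⟩
      rw [shiftVal hj hd'.1 hd'.2, if_neg (by omega)]
      omega

lemma rot_disj (hD : D ⊆ Finset.Icc 1 (2*n)) {j y : ℕ} :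
    Disjoint ((D ∩ Finset.Icc (j+1) (j+y)).image (fun d => d - j))
      ((D ∩ Finset.Icc 1 (j + y - 2*n)).image (fun d => d + (2*n - j))) := by
  apply Finset.disjoint_left.mpr
  intro a h1 h2
  simp only [mem_image, mem_inter, mem_Icc] at h1 h2
  obtain ⟨d, ⟨hdD, hd1, hd2⟩, rfl⟩ := h1
  obtain ⟨e, ⟨heD, he1, he2⟩, hea⟩ := h2
  have hd' := hD hdD
  simp only [mem_Icc] at hd'
  omega

lemma rot_card1 (hD : D ⊆ Finset.Icc 1 (2*n)) {j y : ℕ} :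
    ((D ∩ Finset.Icc (j+1) (j+y)).image (fun d => d - j)).card
      = (D ∩ Finset.Icc (j+1) (j+y)).card := by
  apply Finset.card_image_of_injOn
  intro a ha b hb hab
  simp only [mem_coe, mem_inter, mem_Icc] at ha hb
  dsimp only at hab
  omega

lemma rot_card2 {j y : ℕ} :
    ((D ∩ Finset.Icc 1 (j + y - 2*n)).image (fun d => d + (2*n - j))).card
      = (D ∩ Finset.Icc 1 (j + y - 2*n)).card := by
  apply Finset.card_image_of_injOn
  intro a _ b _ hab
  dsimp only at hab
  omega

lemma rot_card (hn : 1 ≤ n) (hD : D ⊆ Finset.Icc 1 (2*n)) {j y : ℕ}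
    (hj : j < 2*n) (hy : y ≤ 2*n) :
    (shiftDown n j D ∩ Finset.Icc 1 y).card + cc n D j = cc n D (j + y) := by
  rw [rot_inter hn hD hj hy, card_union_of_disjoint (rot_disj hD), rot_card1 hD, rot_card2]
  have h1 : (D ∩ Finset.Icc 1 (j+y)).card
      = (D ∩ Finset.Icc 1 j).card + (D ∩ Finset.Icc (j+1) (j+y)).card :=
    card_split (by omega)
  have hj0 : j - 2*n = 0 := by omega
  unfold cc
  rw [hj0]
  simp only [Finset.Icc_eq_empty_of_lt (by omega : (0:ℕ) < 1), Finset.inter_empty, card_empty]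
  omega

lemma sum_image_sub {j : ℕ} (T : Finset ℕ) (hT : ∀ d ∈ T, j + 1 ≤ d) :
    (∑ a ∈ T.image (fun d => d - j), a) + j * T.card = ∑ d ∈ T, d := by
  rw [Finset.sum_image (by intro a ha b hb hab; simp only at hab; have := hT a ha; have := hT b hb; omega)]
  have e : ∑ d ∈ T, d = ∑ d ∈ T, ((d - j) + j) :=
    Finset.sum_congr rfl (fun d hd => by have := hT d hd; omega)
  rw [e, Finset.sum_add_distrib, Finset.sum_const, smul_eq_mul]
  ring

lemma sum_image_add {c : ℕ} (T : Finset ℕ) :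
    (∑ a ∈ T.image (fun d => d + c), a) = (∑ d ∈ T, d) + c * T.card := by
  rw [Finset.sum_image (by intro a _ b _ hab; simp only at hab; omega), Finset.sum_add_distrib,
    Finset.sum_const, smul_eq_mul]
  ring

lemma rot_sum (hn : 1 ≤ n) (hD : D ⊆ Finset.Icc 1 (2*n)) {j y : ℕ}
    (hj : j < 2*n) (hy : y ≤ 2*n) :
    (∑ a ∈ shiftDown n j D ∩ Finset.Icc 1 y, a) + ssum n D j
      + j * (shiftDown n j D ∩ Finset.Icc 1 y).card = ssum n D (j + y) := by
  rw [rot_inter hn hD hj hy, sum_union (rot_disj hD),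
    card_union_of_disjoint (rot_disj hD), rot_card1 hD, rot_card2]
  have hA := sum_image_sub (j := j) (D ∩ Finset.Icc (j+1) (j+y))
    (fun d hd => by simp only [mem_inter, mem_Icc] at hd; omega)
  have hB := sum_image_add (c := 2*n - j) (D ∩ Finset.Icc 1 (j + y - 2*n))
  have hB' : (∑ a ∈ (D ∩ Finset.Icc 1 (j + y - 2*n)).image (fun d => d + (2*n - j)), a)
      + j * (D ∩ Finset.Icc 1 (j + y - 2*n)).card
      = (∑ d ∈ D ∩ Finset.Icc 1 (j + y - 2*n), d)
        + 2*n * (D ∩ Finset.Icc 1 (j + y - 2*n)).card := by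
    rw [hB]
    have : (2*n - j) * (D ∩ Finset.Icc 1 (j + y - 2*n)).card
        + j * (D ∩ Finset.Icc 1 (j + y - 2*n)).card
        = 2*n * (D ∩ Finset.Icc 1 (j + y - 2*n)).card := by
      rw [← Nat.add_mul]
      congr 1
      omega
    omega
  have hD2 : (∑ d ∈ D ∩ Finset.Icc 1 (j+y), d)
      = (∑ d ∈ D ∩ Finset.Icc 1 j, d) + ∑ d ∈ D ∩ Finset.Icc (j+1) (j+y), d :=
    sum_split (by omega)
  have hE : ssum n D j = ∑ d ∈ D ∩ Finset.Icc 1 j, d := ssum_of_le (by omega)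
  have hF : ssum n D (j+y) = (∑ d ∈ D ∩ Finset.Icc 1 (j+y), d)
      + (∑ d ∈ D ∩ Finset.Icc 1 (j + y - 2*n), d)
      + 2*n * (D ∩ Finset.Icc 1 (j + y - 2*n)).card := rfl
  rw [Nat.mul_add]
  omega

lemma cc_zero : cc n D 0 = 0 := by simp [cc]

lemma shift_card (hn : 1 ≤ n) (hD : D ⊆ Finset.Icc 1 (2*n)) (hc : D.card = n)
    {j : ℕ} (hj : j < 2*n) : (shiftDown n j D).card = n := by
  have h1 := rot_card (D := D) hn hD hj (y := 2*n) (le_refl _)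
  have h2 : shiftDown n j D ∩ Finset.Icc 1 (2*n) = shiftDown n j D :=
    Finset.inter_eq_left.mpr (shift_subset hn j)
  rw [h2] at h1
  have h3 := cc_add hD hc (x := j) (by omega)
  omega

lemma shift_sum (hn : 1 ≤ n) (hD : D ⊆ Finset.Icc 1 (2*n)) (hc : D.card = n)
    {j : ℕ} (hj : j < 2*n) :
    (∑ a ∈ shiftDown n j D, a) + j*n = (∑ d ∈ D, d) + 2*n * cc n D j := by
  have h1 := rot_sum (D := D) hn hD hj (y := 2*n) (le_refl _)
  have h2 : shiftDown n j D ∩ Finset.Icc 1 (2*n) = shiftDown n j D :=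
    Finset.inter_eq_left.mpr (shift_subset hn j)
  rw [h2, shift_card hn hD hc hj] at h1
  have h3 := ssum_add hD hc (x := j) (by omega)
  omega

set_option maxHeartbeats 2000000 in
lemma score_iff (hn : 1 ≤ n) (hD : D ⊆ Finset.Icc 1 (2*n)) (hc : D.card = n) {h : ℤ}
    (hs : ((∑ d ∈ D, d : ℕ) : ℤ) = n * (n + h)) {j : ℕ} (hj : j < 2*n) :
    IsScoreBridge n (shiftDown n j D) ↔
      (Ht n D j = h ∧
        ∀ y, j < y → y < j + 2*n → Ht n D y = h → tP n D h j ≤ tP n D h y) := by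
  have hcard' := shift_card hn hD hc hj
  have hz : ((∑ a ∈ shiftDown n j D, a : ℕ) : ℤ) + j*n
      = ((∑ d ∈ D, d : ℕ) : ℤ) + 2*n * cc n D j := by
    exact_mod_cast congrArg (Nat.cast : ℕ → ℤ) (shift_sum hn hD hc hj)
  have hn0 : (n:ℤ) ≠ 0 := by exact_mod_cast (by omega : n ≠ 0)
  constructor
  · rintro ⟨_, _, hsum2, hineq⟩
    have hz2 : ((n:ℤ))^2 + j*n = n*(n+h) + 2*n * cc n D j := by
      rw [← hs, ← hz, hsum2]; push_cast; ring
    have hHt : Ht n D j = h := by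
      have hmul : (n:ℤ) * ((j:ℤ) - 2*cc n D j) = n * h := by ring_nf; ring_nf at hz2; linarith
      have := mul_left_cancel₀ hn0 hmul
      unfold Ht; linarith
    refine ⟨hHt, ?_⟩
    intro y hy1 hy2 hyH
    have hccm : cc n D j ≤ cc n D y := cc_mono hD (le_of_lt hy1)
    have hyH' : (y:ℤ) - 2*cc n D y = h := hyH
    have hHt' : (j:ℤ) - 2*cc n D j = h := hHt
    set k := cc n D y - cc n D j with hk
    have hyk : y = j + 2*k := by omega
    have hcard_k : (shiftDown n j D ∩ Finset.Icc 1 (2*k)).card = k := by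
      have h5 := rot_card (D := D) hn hD hj (y := 2*k) (by omega)
      rw [← hyk] at h5
      omega
    have hineq_k := hineq k (by omega) (by omega) hcard_k
    have hsum_k := rot_sum (D := D) hn hD hj (y := 2*k) (by omega)
    rw [hcard_k, ← hyk] at hsum_k
    have hz1 : ((∑ a ∈ shiftDown n j D ∩ Finset.Icc 1 (2*k), a : ℕ) : ℤ)
        + ssum n D j + j*k = ssum n D y := by exact_mod_cast hsum_k
    have hz3 : ((k:ℤ))^2 ≤ ((∑ a ∈ shiftDown n j D ∩ Finset.Icc 1 (2*k), a : ℕ) : ℤ) := by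
      exact_mod_cast hineq_k
    have hccy : (cc n D y : ℤ) = cc n D j + k := by omega
    have hprod : ((k:ℤ)) * ((j:ℤ) - 2*(cc n D j : ℤ)) = (k:ℤ) * h := by rw [hHt']
    unfold tP
    rw [← hz1, hccy]
    linarith [hz3, hprod, sq_nonneg ((cc n D j : ℤ) + k)]
  · rintro ⟨hHt, hmin⟩
    have hHt' : (j:ℤ) - 2*cc n D j = h := hHt
    refine ⟨shift_subset hn j, hcard', ?_, ?_⟩
    · have hzz : ((∑ a ∈ shiftDown n j D, a : ℕ) : ℤ) = ((n:ℤ))^2 := by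
        rw [hs] at hz; linear_combination hz - (n:ℤ) * hHt'
      exact_mod_cast hzz
    · intro k hk1 hk2 hcardk
      have hrc := rot_card (D := D) hn hD hj (y := 2*k) (by omega)
      rw [hcardk] at hrc
      have hHty : Ht n D (j + 2*k) = h := by
        unfold Ht at hHt ⊢
        push_cast
        omega
      have htp := hmin (j + 2*k) (by omega) (by omega) hHty
      have hsum_k := rot_sum (D := D) hn hD hj (y := 2*k) (by omega)
      rw [hcardk] at hsum_k
      have hz1 : ((∑ a ∈ shiftDown n j D ∩ Finset.Icc 1 (2*k), a : ℕ) : ℤ)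
          + ssum n D j + j*k = ssum n D (j + 2*k) := by exact_mod_cast hsum_k
      have hccy : (cc n D (j + 2*k) : ℤ) = cc n D j + k := by omega
      unfold tP at htp
      rw [← hz1, hccy] at htp
      have hprod : ((k:ℤ)) * ((j:ℤ) - 2*(cc n D j : ℤ)) = (k:ℤ) * h := by rw [hHt']
      have : ((k:ℤ))^2 ≤ ((∑ a ∈ shiftDown n j D ∩ Finset.Icc 1 (2*k), a : ℕ) : ℤ) := by
        linarith [htp, hprod, sq_nonneg ((cc n D j : ℤ) + k)]
      exact_mod_cast this

lemma gauss_Icc (m : ℕ) : (∑ x ∈ Finset.Icc 1 m, (x:ℤ)) * 2 = m * (m+1) := by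
  induction m with
  | zero => simp
  | succ b ih =>
    rw [Finset.sum_Icc_succ_top (by omega)]
    push_cast
    push_cast at ih
    ring_nf
    ring_nf at ih
    linarith

lemma inter_eq_filter (hD : D ⊆ Finset.Icc 1 (2*n)) (x : ℕ) :
    D ∩ Finset.Icc 1 x = D.filter (fun d => d ≤ x) := by
  ext d
  simp only [mem_inter, mem_Icc, mem_filter]
  constructor
  · rintro ⟨h1, h2, h3⟩; exact ⟨h1, h3⟩
  · rintro ⟨h1, h2⟩
    have := hD h1
    simp only [mem_Icc] at this
    exact ⟨h1, this.1, h2⟩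

lemma filter_ge_Icc (d m : ℕ) (hd : 1 ≤ d) :
    (Finset.Icc 1 m).filter (fun x => d ≤ x) = Finset.Icc d m := by
  ext x
  simp only [mem_filter, mem_Icc]
  omega

lemma sum_Ht (hn : 1 ≤ n) (hD : D ⊆ Finset.Icc 1 (2*n)) (hc : D.card = n) {h : ℤ}
    (hs : ((∑ d ∈ D, d : ℕ) : ℤ) = n * (n + h)) :
    ∑ x ∈ Finset.Icc 1 (2*n), Ht n D x = 2*n*h - n := by
  have e1 : ∀ x ∈ Finset.Icc 1 (2*n), Ht n D x
      = (x:ℤ) - 2 * ∑ d ∈ D, (if d ≤ x then (1:ℤ) else 0) := by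
    intro x hx
    simp only [mem_Icc] at hx
    unfold Ht
    rw [cc_of_le hx.2, inter_eq_filter hD]
    congr 1
    rw [Finset.card_filter]
    push_cast
    rfl
  rw [Finset.sum_congr rfl e1, Finset.sum_sub_distrib, ← Finset.mul_sum, Finset.sum_comm]
  have e2 : ∀ d ∈ D, (∑ x ∈ Finset.Icc 1 (2*n), if d ≤ x then (1:ℤ) else 0)
      = ((2*n + 1 - d : ℕ) : ℤ) := by
    intro d hd
    have hd' := hD hd
    simp only [mem_Icc] at hd'
    rw [Finset.sum_boole, filter_ge_Icc d (2*n) hd'.1]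
    simp [Nat.card_Icc]
  rw [Finset.sum_congr rfl e2]
  have e3 : ∑ d ∈ D, ((2*n + 1 - d : ℕ) : ℤ) = n * (2*n+1) - ∑ d ∈ D, (d:ℤ) := by
    have e3' : ∀ d ∈ D, ((2*n + 1 - d : ℕ) : ℤ) = (2*n+1 : ℤ) - d := by
      intro d hd
      have hdd := hD hd
      simp only [mem_Icc] at hdd
      push_cast [Nat.cast_sub (by omega : d ≤ 2*n+1)]
      ring
    rw [Finset.sum_congr rfl e3', Finset.sum_sub_distrib, Finset.sum_const, hc]
    push_cast
    ring
  rw [e3]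
  have e4 : (∑ d ∈ D, (d:ℤ)) = ((∑ d ∈ D, d : ℕ) : ℤ) := by push_cast; rfl
  have e5 := gauss_Icc (2*n)
  rw [e4, hs]
  push_cast
  push_cast at e5
  nlinarith [e5]

lemma ivt {f : ℕ → ℤ} (hstep : ∀ x, f (x+1) = f x + 1 ∨ f (x+1) = f x - 1)
    {a b : ℕ} (hab : a ≤ b) {v : ℤ} (ha : f a ≤ v) (hb : v ≤ f b) :
    ∃ x, a ≤ x ∧ x ≤ b ∧ f x = v := by
  induction b with
  | zero =>
    have : a = 0 := by omega
    subst this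
    exact ⟨0, le_refl _, le_refl _, le_antisymm ha hb⟩
  | succ b ih =>
    rcases Nat.eq_or_lt_of_le hab with he | hlt
    · exact ⟨a, le_refl _, by omega, by rw [he] at ha ⊢; omega⟩
    · rcases le_or_gt v (f b) with hfb | hfb
      · obtain ⟨x, h1, h2, h3⟩ := ih (by omega) hfb
        exact ⟨x, h1, by omega, h3⟩
      · have : f (b+1) = v := by rcases hstep b with h | h <;> omega
        exact ⟨b+1, by omega, le_refl _, this⟩

lemma Ht_succ (hD : D ⊆ Finset.Icc 1 (2*n)) (x : ℕ) :
    Ht n D (x+1) = Ht n D x + 1 ∨ Ht n D (x+1) = Ht n D x - 1 := by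
  unfold Ht
  rcases cc_succ hD x with h | h <;> rw [h] <;> push_cast <;> omega

lemma Ht_zero : Ht n D 0 = 0 := by simp [Ht, cc_zero]

lemma Ht_2n (hD : D ⊆ Finset.Icc 1 (2*n)) (hc : D.card = n) : Ht n D (2*n) = 0 := by
  unfold Ht
  rw [cc_of_le (le_refl _), inter_all hD (le_refl _), hc]
  push_cast
  ring

lemma Ht_add (hD : D ⊆ Finset.Icc 1 (2*n)) (hc : D.card = n) {x : ℕ} (hx : x ≤ 2*n) :
    Ht n D (x + 2*n) = Ht n D x := by
  unfold Ht
  rw [cc_add hD hc hx]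
  push_cast
  ring

lemma tP_add (hD : D ⊆ Finset.Icc 1 (2*n)) (hc : D.card = n) {h : ℤ}
    (hs : ((∑ d ∈ D, d : ℕ) : ℤ) = n * (n + h)) {x : ℕ} (hx : x ≤ 2*n) :
    tP n D h (x + 2*n) = tP n D h x := by
  unfold tP
  rw [ssum_add hD hc hx, cc_add hD hc hx]
  rw [Nat.cast_sum] at hs
  push_cast
  linear_combination hs

lemma exists_level (hn : 1 ≤ n) (hD : D ⊆ Finset.Icc 1 (2*n)) (hc : D.card = n) {h : ℤ}
    (hs : ((∑ d ∈ D, d : ℕ) : ℤ) = n * (n + h)) :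
    ∃ x, x < 2*n ∧ Ht n D x = h := by
  have havg := sum_Ht hn hD hc hs
  have hcard : (Finset.Icc 1 (2*n)).card = 2*n := by rw [Nat.card_Icc]; omega
  have h1 : ∃ x, 1 ≤ x ∧ x ≤ 2*n ∧ h ≤ Ht n D x := by
    by_contra hcon
    push_neg at hcon
    have : ∑ x ∈ Finset.Icc 1 (2*n), Ht n D x
        ≤ ∑ _x ∈ Finset.Icc 1 (2*n), (h - 1) := by
      apply Finset.sum_le_sum
      intro x hx
      simp only [mem_Icc] at hx
      have := hcon x hx.1 hx.2
      omega
    rw [Finset.sum_const, hcard, nsmul_eq_mul] at this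
    push_cast at this
    have h2n : (1:ℤ) ≤ n := by exact_mod_cast hn
    nlinarith [this, havg]
  have h2 : ∃ x, 1 ≤ x ∧ x ≤ 2*n ∧ Ht n D x < h := by
    by_contra hcon
    push_neg at hcon
    have : ∑ _x ∈ Finset.Icc 1 (2*n), h ≤ ∑ x ∈ Finset.Icc 1 (2*n), Ht n D x := by
      apply Finset.sum_le_sum
      intro x hx
      simp only [mem_Icc] at hx
      exact hcon x hx.1 hx.2
    rw [Finset.sum_const, hcard, nsmul_eq_mul] at this
    push_cast at this
    have h2n : (1:ℤ) ≤ n := by exact_mod_cast hn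
    nlinarith [this, havg]
  obtain ⟨x2, hx21, hx22, hx2⟩ := h1
  obtain ⟨x1, hx11, hx12, hx1⟩ := h2
  have hfin : ∃ x, x ≤ 2*n ∧ Ht n D x = h := by
    rcases le_total x1 x2 with hle | hle
    · obtain ⟨x, ha, hb, hcc⟩ := ivt (Ht_succ hD) hle (le_of_lt hx1) hx2
      exact ⟨x, by omega, hcc⟩
    · obtain ⟨x, ha, hb, hcc⟩ := ivt (f := fun x => - Ht n D x)
        (fun x => by
          rcases Ht_succ hD x with hh | hh
          · right; show -Ht n D (x+1) = -Ht n D x - 1; rw [hh]; ring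
          · left; show -Ht n D (x+1) = -Ht n D x + 1; rw [hh]; ring)
        hle (by show -Ht n D x2 ≤ -h; omega) (by show -h ≤ -Ht n D x1; omega)
      have hcc' : -Ht n D x = -h := hcc
      exact ⟨x, by omega, by omega⟩
  obtain ⟨x, hx, hxh⟩ := hfin
  rcases Nat.eq_or_lt_of_le hx with he | hlt
  · refine ⟨0, by omega, ?_⟩
    rw [Ht_zero]
    rw [he, Ht_2n hD hc] at hxh
    omega
  · exact ⟨x, hlt, hxh⟩

lemma rot_key (hn : 1 ≤ n) (hD : D ⊆ Finset.Icc 1 (2*n)) (hc : D.card = n) {h : ℤ}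
    {j k : ℕ} (hj : j < 2*n) (hk : k ≤ n) (hHtj : Ht n D j = h)
    (hcardk : (shiftDown n j D ∩ Finset.Icc 1 (2*k)).card = k) :
    Ht n D (j + 2*k) = h ∧
    ((∑ a ∈ shiftDown n j D ∩ Finset.Icc 1 (2*k), a : ℕ) : ℤ)
      = tP n D h (j+2*k) - tP n D h j + (k:ℤ)^2 := by
  have hrc := rot_card (D := D) hn hD hj (y := 2*k) (by omega)
  rw [hcardk] at hrc
  have hHt' : (j:ℤ) - 2*cc n D j = h := hHtj
  constructor
  · unfold Ht
    push_cast
    omega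
  · have hsum_k := rot_sum (D := D) hn hD hj (y := 2*k) (by omega)
    rw [hcardk] at hsum_k
    have hz1 : ((∑ a ∈ shiftDown n j D ∩ Finset.Icc 1 (2*k), a : ℕ) : ℤ)
        + ssum n D j + j*k = ssum n D (j + 2*k) := by exact_mod_cast hsum_k
    have hccy : (cc n D (j + 2*k) : ℤ) = cc n D j + k := by omega
    have hprod : ((k:ℤ)) * ((j:ℤ) - 2*(cc n D j : ℤ)) = (k:ℤ) * h := by rw [hHt']
    unfold tP
    rw [hccy]
    linear_combination hz1 - hprod

lemma firstIrr_shift (hsc : IsScoreBridge n (shiftDown n j D)) :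
    True := trivial

lemma good_iff (hn : 1 ≤ n) (hD : D ⊆ Finset.Icc 1 (2*n)) (hc : D.card = n) {h : ℤ}
    (hs : ((∑ d ∈ D, d : ℕ) : ℤ) = n * (n + h)) {j : ℕ} (hj : j < 2*n)
    (hsc : IsScoreBridge n (shiftDown n j D)) :
    ((2*n - j) % (2*n) < 2 * firstIrr n (shiftDown n j D)) ↔
      (j = 0 ∨ ∀ y, j < y → y ≤ 2*n → Ht n D y = h → tP n D h y ≠ tP n D h j) := by
  have hHtj : Ht n D j = h := ((score_iff hn hD hc hs hj).mp hsc).1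
  have hE : shiftDown n j D ∩ Finset.Icc 1 (2*n) = shiftDown n j D :=
    Finset.inter_eq_left.mpr (shift_subset hn j)
  have hFn : n ∈ {k | 0 < k ∧ (shiftDown n j D ∩ Finset.Icc 1 (2 * k)).card = k ∧
      (∑ d ∈ shiftDown n j D ∩ Finset.Icc 1 (2 * k), d) = k ^ 2} := by
    refine ⟨by omega, ?_, ?_⟩
    · rw [hE]; exact hsc.2.1
    · rw [hE]; exact hsc.2.2.1
  have hInfmem := Nat.sInf_mem (Set.nonempty_of_mem hFn)
  have hIrr : firstIrr n (shiftDown n j D) = sInf {k | 0 < k ∧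
      (shiftDown n j D ∩ Finset.Icc 1 (2 * k)).card = k ∧
      (∑ d ∈ shiftDown n j D ∩ Finset.Icc 1 (2 * k), d) = k ^ 2} := rfl
  rw [← hIrr] at hInfmem
  have hkle : ∀ k ∈ {k | 0 < k ∧ (shiftDown n j D ∩ Finset.Icc 1 (2 * k)).card = k ∧
      (∑ d ∈ shiftDown n j D ∩ Finset.Icc 1 (2 * k), d) = k ^ 2}, k ≤ n := by
    rintro k ⟨hk0, hkc, _⟩
    have h1 : (shiftDown n j D ∩ Finset.Icc 1 (2*k)).card ≤ (shiftDown n j D).card :=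
      Finset.card_le_card Finset.inter_subset_left
    rw [hkc, hsc.2.1] at h1
    exact h1
  constructor
  · intro hlt
    by_cases hj0 : j = 0
    · exact Or.inl hj0
    right
    intro y hy1 hy2 hyH htp_eq
    have hccm : cc n D j ≤ cc n D y := cc_mono hD (le_of_lt hy1)
    have hyH' : (y:ℤ) - 2*cc n D y = h := hyH
    have hHt' : (j:ℤ) - 2*cc n D j = h := hHtj
    set k := cc n D y - cc n D j with hk
    have hyk : y = j + 2*k := by omega
    have hkn : k ≤ n := by
      have := cc_mono hD (show y ≤ 2*n by omega)
      have h2n : cc n D (2*n) = n := by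
        rw [cc_of_le (le_refl _), inter_all hD (le_refl _), hc]
      omega
    have hcard_k : (shiftDown n j D ∩ Finset.Icc 1 (2*k)).card = k := by
      have h5 := rot_card (D := D) hn hD hj (y := 2*k) (by omega)
      rw [← hyk] at h5
      omega
    obtain ⟨_, hsum_k⟩ := rot_key hn hD hc hj hkn hHtj hcard_k
    rw [← hyk, htp_eq] at hsum_k
    have hkF : k ∈ {k | 0 < k ∧ (shiftDown n j D ∩ Finset.Icc 1 (2 * k)).card = k ∧
        (∑ d ∈ shiftDown n j D ∩ Finset.Icc 1 (2 * k), d) = k ^ 2} := by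
      refine ⟨by omega, hcard_k, ?_⟩
      have : ((∑ a ∈ shiftDown n j D ∩ Finset.Icc 1 (2*k), a : ℕ) : ℤ) = (k:ℤ)^2 := by
        rw [hsum_k]; ring
      exact_mod_cast this
    have hle := Nat.sInf_le hkF
    rw [← hIrr] at hle
    rw [Nat.mod_eq_of_lt (by omega : 2*n - j < 2*n)] at hlt
    omega
  · intro H
    by_cases hj0 : j = 0
    · subst hj0
      rw [Nat.sub_zero, Nat.mod_self]
      have := hInfmem.1
      omega
    rcases H with hj0' | Hy
    · exact absurd hj0' hj0
    rw [Nat.mod_eq_of_lt (by omega : 2*n - j < 2*n)]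
    set l := firstIrr n (shiftDown n j D) with hldef
    by_contra hcon
    push_neg at hcon
    -- hcon : 2*l ≤ 2*n - j,  so j + 2*l ≤ 2*n
    have hln : l ≤ n := hkle l hInfmem
    obtain ⟨hl0, hlc, hls⟩ := hInfmem
    obtain ⟨hHty, hsum_l⟩ := rot_key hn hD hc hj hln hHtj hlc
    have htp_eq : tP n D h (j + 2*l) = tP n D h j := by
      have : ((∑ a ∈ shiftDown n j D ∩ Finset.Icc 1 (2*l), a : ℕ) : ℤ) = (l:ℤ)^2 := by
        exact_mod_cast hls
      rw [this] at hsum_l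
      linarith
    exact Hy (j + 2*l) (by omega) (by omega) hHty htp_eq

lemma exists_unique_good (hn : 1 ≤ n) (hD : D ⊆ Finset.Icc 1 (2*n)) (hc : D.card = n)
    {h : ℤ} (hs : ((∑ d ∈ D, d : ℕ) : ℤ) = n * (n + h)) :
    ∃! j, j < 2*n ∧ IsScoreBridge n (shiftDown n j D) ∧
      (2*n - j) % (2*n) < 2 * firstIrr n (shiftDown n j D) := by
  classical
  obtain ⟨x0, hx0, hx0h⟩ := exists_level hn hD hc hs
  set L := (Finset.range (2*n)).filter (fun x => Ht n D x = h) with hL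
  have hLne : L.Nonempty := ⟨x0, Finset.mem_filter.mpr ⟨Finset.mem_range.mpr hx0, hx0h⟩⟩
  set μ := (L.image (tP n D h)).min' (hLne.image _) with hμ
  set M := L.filter (fun x => tP n D h x = μ) with hM
  have hMne : M.Nonempty := by
    obtain ⟨y, hyL, hyμ⟩ := Finset.mem_image.mp ((L.image (tP n D h)).min'_mem (hLne.image _))
    exact ⟨y, Finset.mem_filter.mpr ⟨hyL, hyμ⟩⟩
  have hμ_le : ∀ y ∈ L, μ ≤ tP n D h y := fun y hy =>
    Finset.min'_le _ _ (Finset.mem_image_of_mem _ hy)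
  have hML : ∀ y ∈ M, y < 2*n ∧ Ht n D y = h ∧ tP n D h y = μ := by
    intro y hy
    obtain ⟨hyL, hyμ⟩ := Finset.mem_filter.mp hy
    obtain ⟨hyr, hyh⟩ := Finset.mem_filter.mp hyL
    exact ⟨Finset.mem_range.mp hyr, hyh, hyμ⟩
  have hHt2n : Ht n D (2*n) = Ht n D 0 := by
    have := Ht_add hD hc (x := 0) (by omega)
    simpa using this
  have htP2n : tP n D h (2*n) = tP n D h 0 := by
    have := tP_add hD hc hs (x := 0) (by omega)
    simpa using this
  have hchar : ∀ j, j < 2*n →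
      ((IsScoreBridge n (shiftDown n j D) ∧
        (2*n - j) % (2*n) < 2 * firstIrr n (shiftDown n j D)) ↔
       (j ∈ M ∧ (j = 0 ∨ (0 ∉ M ∧ ∀ y ∈ M, y ≤ j)))) := by
    intro j hj
    constructor
    · rintro ⟨hsc, hgood⟩
      obtain ⟨hHtj, hminj⟩ := (score_iff hn hD hc hs hj).mp hsc
      have hjL : j ∈ L := Finset.mem_filter.mpr ⟨Finset.mem_range.mpr hj, hHtj⟩
      have hmin_all : ∀ y ∈ L, tP n D h j ≤ tP n D h y := by
        intro y hy
        obtain ⟨hyr, hyh⟩ := Finset.mem_filter.mp hy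
        have hyr' := Finset.mem_range.mp hyr
        rcases lt_trichotomy j y with hlt | heq | hgt
        · exact hminj y hlt (by omega) hyh
        · rw [heq]
        · have h1 : Ht n D (y + 2*n) = h := by rw [Ht_add hD hc (by omega)]; exact hyh
          have h2 := hminj (y + 2*n) (by omega) (by omega) h1
          rwa [tP_add hD hc hs (by omega)] at h2
      have hjμ : tP n D h j = μ := by
        obtain ⟨y, hyL, hyμ⟩ := Finset.mem_image.mp ((L.image (tP n D h)).min'_mem (hLne.image _))
        have := hmin_all y hyL
        have := hμ_le j hjL
        omega
      have hjM : j ∈ M := Finset.mem_filter.mpr ⟨hjL, hjμ⟩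
      refine ⟨hjM, ?_⟩
      rcases (good_iff hn hD hc hs hj hsc).mp hgood with hj0 | hne
      · exact Or.inl hj0
      by_cases hj0 : j = 0
      · exact Or.inl hj0
      right
      constructor
      · intro h0M
        obtain ⟨_, h0h, h0μ⟩ := hML 0 h0M
        exact hne (2*n) (by omega) (le_refl _) (by rw [hHt2n]; exact h0h)
          (by rw [htP2n, h0μ, hjμ])
      · intro y hyM
        obtain ⟨hy2n, hyh, hyμ⟩ := hML y hyM
        by_contra hcon
        exact hne y (by omega) (by omega) hyh (by rw [hyμ, hjμ])
    · rintro ⟨hjM, hrest⟩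
      obtain ⟨_, hHtj, hjμ⟩ := hML j hjM
      have hminj : ∀ y, j < y → y < j + 2*n → Ht n D y = h → tP n D h j ≤ tP n D h y := by
        intro y hy1 hy2 hyh
        rcases lt_trichotomy y (2*n) with hlt | heq | hgt
        · have : y ∈ L := Finset.mem_filter.mpr ⟨Finset.mem_range.mpr hlt, hyh⟩
          rw [hjμ]; exact hμ_le y this
        · subst heq
          rw [hHt2n] at hyh
          have : (0:ℕ) ∈ L := Finset.mem_filter.mpr ⟨Finset.mem_range.mpr (by omega), hyh⟩
          rw [hjμ, htP2n]
          exact hμ_le 0 this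
        · have hy' : y - 2*n < 2*n := by omega
          have he : y = (y - 2*n) + 2*n := by omega
          rw [he, Ht_add hD hc (by omega)] at hyh
          have : y - 2*n ∈ L := Finset.mem_filter.mpr ⟨Finset.mem_range.mpr hy', hyh⟩
          rw [he, tP_add hD hc hs (by omega), hjμ]
          exact hμ_le _ this
      have hsc : IsScoreBridge n (shiftDown n j D) :=
        (score_iff hn hD hc hs hj).mpr ⟨hHtj, hminj⟩
      refine ⟨hsc, ?_⟩
      apply (good_iff hn hD hc hs hj hsc).mpr
      rcases hrest with hj0 | ⟨h0M, hmax⟩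
      · exact Or.inl hj0
      right
      intro y hy1 hy2 hyh htp
      rcases lt_or_ge y (2*n) with hlt | hge
      · have hyL : y ∈ L := Finset.mem_filter.mpr ⟨Finset.mem_range.mpr hlt, hyh⟩
        have hyM : y ∈ M := Finset.mem_filter.mpr ⟨hyL, by rw [htp, hjμ]⟩
        exact absurd (hmax y hyM) (by omega)
      · have hy2n : y = 2*n := by omega
        subst hy2n
        rw [hHt2n] at hyh
        have h0L : (0:ℕ) ∈ L := Finset.mem_filter.mpr ⟨Finset.mem_range.mpr (by omega), hyh⟩
        have h0M : (0:ℕ) ∈ M := Finset.mem_filter.mpr ⟨h0L, by rw [← htP2n, htp, hjμ]⟩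
        exact absurd h0M ‹(0:ℕ) ∉ M›
  by_cases h0M : (0:ℕ) ∈ M
  · refine ⟨0, ⟨by omega, (hchar 0 (by omega)).mpr ⟨h0M, Or.inl rfl⟩⟩, ?_⟩
    intro y ⟨hy2n, hyG⟩
    rcases (hchar y hy2n).mp hyG with ⟨hyM, hrest⟩
    rcases hrest with h | ⟨h0M', _⟩
    · exact h
    · exact absurd h0M h0M'
  · refine ⟨M.max' hMne, ⟨(hML _ (M.max'_mem hMne)).1,
      (hchar _ (hML _ (M.max'_mem hMne)).1).mpr
        ⟨M.max'_mem hMne, Or.inr ⟨h0M, fun y hy => Finset.le_max' M y hy⟩⟩⟩, ?_⟩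
    intro y ⟨hy2n, hyG⟩
    rcases (hchar y hy2n).mp hyG with ⟨hyM, hrest⟩
    rcases hrest with h | ⟨_, hmax⟩
    · subst h; exact absurd hyM h0M
    · exact le_antisymm (Finset.le_max' M y hyM) (hmax _ (M.max'_mem hMne))

lemma firstIrr_le (hn : 1 ≤ n) {E : Finset ℕ} (hsc : IsScoreBridge n E) : firstIrr n E ≤ n := by
  apply Nat.sInf_le
  have hE : E ∩ Finset.Icc 1 (2*n) = E := Finset.inter_eq_left.mpr hsc.1
  exact ⟨by omega, by rw [hE]; exact hsc.2.1, by rw [hE]; exact hsc.2.2.1⟩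

lemma shift_inv (hn : 1 ≤ n) (hD : D ⊆ Finset.Icc 1 (2*n)) {m : ℕ} (hm : m < 2*n) :
    shiftDown n ((2*n - m) % (2*n)) (shiftDown n m D) = D := by
  have hj : (2*n - m) % (2*n) < 2*n := Nat.mod_lt _ (by omega)
  rw [shift_comp hD hj hm]
  have : ((2*n - m) % (2*n) + m) % (2*n) = 0 := by
    rcases Nat.eq_zero_or_pos m with h0 | h0
    · subst h0
      simp [Nat.mod_self]
    · rw [Nat.mod_eq_of_lt (by omega : 2*n - m < 2*n),
        show 2*n - m + m = 2*n from by omega, Nat.mod_self]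
  rw [this, shift_zero hD]

lemma m_of_j (hn : 1 ≤ n) {m : ℕ} (hm : m < 2*n) : (2*n - (2*n - m) % (2*n)) % (2*n) = m := by
  rcases Nat.eq_zero_or_pos m with h0 | h0
  · subst h0
    simp [Nat.mod_self]
  · rw [Nat.mod_eq_of_lt (by omega : 2*n - m < 2*n),
      show 2*n - (2*n - m) = m from by omega, Nat.mod_eq_of_lt hm]

lemma score_hs {E : Finset ℕ} (hsc : IsScoreBridge n E) :
    ((∑ d ∈ E, d : ℕ) : ℤ) = n * (n + 0) := by
  rw [hsc.2.2.1]
  push_cast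
  ring

lemma maps_to (hn : 1 ≤ n) {E : Finset ℕ} {m : ℕ} (hsc : IsScoreBridge n E)
    (hm : m < 2 * firstIrr n E) :
    shiftDown n m E ⊆ Finset.Icc 1 (2*n) ∧ (shiftDown n m E).card = n ∧
      (∑ d ∈ shiftDown n m E, d) % n = 0 := by
  have hm2n : m < 2*n := by
    have := firstIrr_le hn hsc
    omega
  obtain ⟨hD, hc, hsum, _⟩ := hsc
  refine ⟨shift_subset hn m, shift_card hn hD hc hm2n, ?_⟩
  have h1 := shift_sum hn hD hc hm2n
  rw [hsum] at h1
  have hdvd : n ∣ (∑ a ∈ shiftDown n m E, a) + m*n := by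
    rw [h1]
    exact ⟨n + 2*cc n E m, by ring⟩
  have hdvd2 : n ∣ (∑ a ∈ shiftDown n m E, a) :=
    (Nat.dvd_add_iff_left (⟨m, by ring⟩ : n ∣ m*n)).mpr hdvd
  omega

lemma the_bijOn (hn : 1 ≤ n) :
    Set.BijOn (fun p : Finset ℕ × ℕ => shiftDown n p.2 p.1)
      {p : Finset ℕ × ℕ | IsScoreBridge n p.1 ∧ p.2 < 2 * firstIrr n p.1}
      {D' : Finset ℕ | D' ⊆ Finset.Icc 1 (2 * n) ∧ D'.card = n ∧
        (∑ d ∈ D', d) % n = 0} := by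
  refine ⟨?_, ?_, ?_⟩
  · rintro ⟨E, m⟩ ⟨hsc, hm⟩
    exact maps_to hn hsc hm
  · rintro ⟨E1, m1⟩ ⟨hsc1, hm1⟩ ⟨E2, m2⟩ ⟨hsc2, hm2⟩ heq
    have heq' : shiftDown n m1 E1 = shiftDown n m2 E2 := heq
    have hm1n : m1 < 2*n := by have := firstIrr_le hn hsc1; omega
    have hm2n : m2 < 2*n := by have := firstIrr_le hn hsc2; omega
    obtain ⟨hEsub, hEcard, hEmod⟩ := maps_to hn hsc1 hm1
    set E := shiftDown n m1 E1 with hEdef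
    obtain ⟨t, ht⟩ := Nat.dvd_of_mod_eq_zero hEmod
    have hs : ((∑ d ∈ E, d : ℕ) : ℤ) = n * (n + ((t:ℤ) - n)) := by
      rw [ht]; push_cast; ring
    obtain ⟨j0, hj0, huniq⟩ := exists_unique_good hn hEsub hEcard hs
    set j1 := (2*n - m1) % (2*n) with hj1
    set j2 := (2*n - m2) % (2*n) with hj2
    have hD1 : shiftDown n j1 E = E1 := shift_inv hn hsc1.1 hm1n
    have hD2 : shiftDown n j2 E = E2 := by rw [heq']; exact shift_inv hn hsc2.1 hm2n
    have hg1 : j1 < 2*n ∧ IsScoreBridge n (shiftDown n j1 E) ∧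
        (2*n - j1) % (2*n) < 2 * firstIrr n (shiftDown n j1 E) := by
      refine ⟨Nat.mod_lt _ (by omega), by rw [hD1]; exact hsc1, ?_⟩
      rw [hD1, hj1, m_of_j hn hm1n]
      exact hm1
    have hg2 : j2 < 2*n ∧ IsScoreBridge n (shiftDown n j2 E) ∧
        (2*n - j2) % (2*n) < 2 * firstIrr n (shiftDown n j2 E) := by
      refine ⟨Nat.mod_lt _ (by omega), by rw [hD2]; exact hsc2, ?_⟩
      rw [hD2, hj2, m_of_j hn hm2n]
      exact hm2
    have he1 := huniq j1 hg1
    have he2 := huniq j2 hg2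
    have hjj : j1 = j2 := by rw [he1, he2]
    have hmm : m1 = m2 := by
      have a1 := m_of_j hn hm1n
      have a2 := m_of_j hn hm2n
      rw [← hj1] at a1
      rw [← hj2] at a2
      rw [← a1, ← a2, hjj]
    have hee : E1 = E2 := by rw [← hD1, ← hD2, hjj]
    rw [Prod.mk.injEq]
    exact ⟨hee, hmm⟩
  · rintro E ⟨hEsub, hEcard, hEmod⟩
    obtain ⟨t, ht⟩ := Nat.dvd_of_mod_eq_zero hEmod
    have hs : ((∑ d ∈ E, d : ℕ) : ℤ) = n * (n + ((t:ℤ) - n)) := by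
      rw [ht]; push_cast; ring
    obtain ⟨j, ⟨hj2n, hscE, hgood⟩, _⟩ := exists_unique_good hn hEsub hEcard hs
    refine ⟨(shiftDown n j E, (2*n - j) % (2*n)), ⟨hscE, hgood⟩, ?_⟩
    show shiftDown n ((2*n - j) % (2*n)) (shiftDown n j E) = E
    exact shift_inv hn hEsub hj2n

lemma sum_Icc_1 (hn : 1 ≤ n) : (∑ d ∈ Finset.Icc 1 (2*n), d) = n * (2*n+1) := by
  have h1 := gauss_Icc (2*n)
  have h2 : ((∑ d ∈ Finset.Icc 1 (2*n), d : ℕ) : ℤ) = ∑ x ∈ Finset.Icc 1 (2*n), (x:ℤ) := by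
    push_cast; rfl
  have h3 : (∑ d ∈ Finset.Icc 1 (2*n), d) * 2 = (2*n) * (2*n+1) := by
    have : ((∑ d ∈ Finset.Icc 1 (2*n), d : ℕ) : ℤ) * 2 = (2*n) * (2*n+1) := by
      rw [h2, h1]; push_cast; ring
    exact_mod_cast this
  have h4 : (n * (2*n+1)) * 2 = (2*n) * (2*n+1) := by ring
  omega

lemma card_target (hn : 1 ≤ n) :
    Nat.card {D' : Finset ℕ | D' ⊆ Finset.Icc 1 (2 * n) ∧ D'.card = n ∧
      (∑ d ∈ D', d) % n = 0} = 2 * N n := by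
  classical
  set T : Finset (Finset ℕ) := ((Finset.Icc 1 (2*n)).powerset).filter
    (fun E => E.card = n ∧ (∑ d ∈ E, d) % n = 0) with hTdef
  set B : Finset (Finset ℕ) := ((Finset.Icc 1 (2*n-1)).powerset).filter
    (fun E => E.card = n ∧ (∑ d ∈ E, d) % n = 0) with hBdef
  have hTset : {D' : Finset ℕ | D' ⊆ Finset.Icc 1 (2 * n) ∧ D'.card = n ∧
      (∑ d ∈ D', d) % n = 0} = (↑T : Set (Finset ℕ)) := by
    ext E
    simp only [Set.mem_setOf_eq, Finset.coe_filter, Finset.mem_powerset, Set.mem_setOf_eq, hTdef]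
  have hBset : {D : Finset ℕ | D ⊆ Finset.Icc 1 (2 * n - 1) ∧ D.card = n ∧
      (∑ d ∈ D, d) % n = 0} = (↑B : Set (Finset ℕ)) := by
    ext E
    simp only [Set.mem_setOf_eq, Finset.coe_filter, Finset.mem_powerset, Set.mem_setOf_eq, hBdef]
  have hN : N n = B.card := by
    show Nat.card {D : Finset ℕ // D ⊆ Finset.Icc 1 (2 * n - 1) ∧ D.card = n ∧
      (∑ d ∈ D, d) % n = 0} = B.card
    rw [show {D : Finset ℕ // D ⊆ Finset.Icc 1 (2 * n - 1) ∧ D.card = n ∧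
      (∑ d ∈ D, d) % n = 0} = ↥{D : Finset ℕ | D ⊆ Finset.Icc 1 (2 * n - 1) ∧ D.card = n ∧
      (∑ d ∈ D, d) % n = 0} from rfl, hBset, Nat.card_coe_set_eq, Set.ncard_coe_finset]
  rw [hTset, Nat.card_coe_set_eq, Set.ncard_coe_finset, hN]
  -- split T by membership of 2n
  have hsplit := Finset.card_filter_add_card_filter_not
    (s := T) (p := fun E => 2*n ∈ E)
  have hT0B : T.filter (fun E => ¬ 2*n ∈ E) = B := by
    ext E
    simp only [Finset.mem_filter, Finset.mem_powerset, hTdef, hBdef]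
    constructor
    · rintro ⟨⟨hsub, hcard', hmod'⟩, hnot⟩
      refine ⟨?_, hcard', hmod'⟩
      intro d hd
      have h1 := hsub hd
      simp only [Finset.mem_Icc] at h1 ⊢
      have : d ≠ 2*n := fun hdd => hnot (hdd ▸ hd)
      omega
    · rintro ⟨hsub, hcard', hmod'⟩
      refine ⟨⟨?_, hcard', hmod'⟩, fun hmem => ?_⟩
      · intro d hd
        have := hsub hd
        simp only [Finset.mem_Icc] at this ⊢
        omega
      · have := hsub hmem
        simp only [Finset.mem_Icc] at this
        omega
  have hmem_T : ∀ E, E ∈ T ↔ (E ⊆ Finset.Icc 1 (2*n) ∧ E.card = n ∧ (∑ d ∈ E, d) % n = 0) := by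
    intro E
    simp only [hTdef, Finset.mem_filter, Finset.mem_powerset]
  have hdvd_Icc : n ∣ ∑ d ∈ Finset.Icc 1 (2*n), d := ⟨2*n+1, sum_Icc_1 hn⟩
  have hcomp_mem : ∀ E, E ⊆ Finset.Icc 1 (2*n) → E.card = n → (∑ d ∈ E, d) % n = 0 →
      (Finset.Icc 1 (2*n) \ E) ⊆ Finset.Icc 1 (2*n) ∧
      (Finset.Icc 1 (2*n) \ E).card = n ∧
      (∑ d ∈ Finset.Icc 1 (2*n) \ E, d) % n = 0 := by
    intro E hsub hcard' hmod'
    refine ⟨Finset.sdiff_subset, ?_, ?_⟩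
    · rw [Finset.card_sdiff_of_subset hsub, Nat.card_Icc, hcard']
      omega
    · have hss := Finset.sum_sdiff (f := fun d => d) hsub
      have hdE : n ∣ ∑ d ∈ E, d := Nat.dvd_of_mod_eq_zero hmod'
      have : n ∣ ∑ d ∈ Finset.Icc 1 (2*n) \ E, d := by
        apply (Nat.dvd_add_iff_left hdE).mpr
        rw [hss]
        exact hdvd_Icc
      omega
  have hcard_eq : (T.filter (fun E => 2*n ∈ E)).card
      = (T.filter (fun E => ¬ 2*n ∈ E)).card := by
    apply Finset.card_bij (fun E _ => Finset.Icc 1 (2*n) \ E)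
    · intro E hE
      rw [Finset.mem_filter] at hE ⊢
      obtain ⟨hET, hE2n⟩ := hE
      rw [hmem_T] at hET
      obtain ⟨hsub, hcard', hmod'⟩ := hET
      refine ⟨(hmem_T _).mpr (hcomp_mem E hsub hcard' hmod'), ?_⟩
      simp only [Finset.mem_sdiff, not_and, not_not]
      exact fun _ => hE2n
    · intro E1 h1 E2 h2 heq
      rw [Finset.mem_filter, hmem_T] at h1 h2
      calc E1 = Finset.Icc 1 (2*n) \ (Finset.Icc 1 (2*n) \ E1) :=
            (Finset.sdiff_sdiff_eq_self h1.1.1).symm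
        _ = Finset.Icc 1 (2*n) \ (Finset.Icc 1 (2*n) \ E2) := by rw [heq]
        _ = E2 := Finset.sdiff_sdiff_eq_self h2.1.1
    · intro E' hE'
      rw [Finset.mem_filter, hmem_T] at hE'
      obtain ⟨⟨hsub, hcard', hmod'⟩, hnot⟩ := hE'
      refine ⟨Finset.Icc 1 (2*n) \ E', ?_, Finset.sdiff_sdiff_eq_self hsub⟩
      rw [Finset.mem_filter, hmem_T]
      refine ⟨hcomp_mem E' hsub hcard' hmod', ?_⟩
      simp only [Finset.mem_sdiff]
      exact ⟨Finset.mem_Icc.mpr (by omega), hnot⟩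
  rw [hT0B] at hsplit hcard_eq
  omega


end SB

/-- The map `(B, m) ↦` (cyclic left shift of `B` by `m`), for score-sequence bridges
`B` and `0 ≤ m < 2ℓ(B)`, is a bijection onto the bridges of length `2n` with
sawtooth area `≡ 0 (mod n)`; consequently `∑_B 2ℓ(B) = 2Nₙ`. -/
theorem score_bridge_shift_bijection (n : ℕ) (hn : 1 ≤ n) :
    Set.BijOn (fun p : Finset ℕ × ℕ => shiftDown n p.2 p.1)
      {p : Finset ℕ × ℕ | IsScoreBridge n p.1 ∧ p.2 < 2 * firstIrr n p.1}
      {D' : Finset ℕ | D' ⊆ Finset.Icc 1 (2 * n) ∧ D'.card = n ∧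
        (∑ d ∈ D', d) % n = 0} ∧
    Nat.card {p : Finset ℕ × ℕ //
        IsScoreBridge n p.1 ∧ p.2 < 2 * firstIrr n p.1} = 2 * N n := by
  refine ⟨SB.the_bijOn hn, ?_⟩
  have h1 : Nat.card {p : Finset ℕ × ℕ //
        IsScoreBridge n p.1 ∧ p.2 < 2 * firstIrr n p.1}
      = Nat.card {D' : Finset ℕ | D' ⊆ Finset.Icc 1 (2 * n) ∧ D'.card = n ∧
        (∑ d ∈ D', d) % n = 0} :=
    Nat.card_congr (Set.BijOn.equiv _ (SB.the_bijOn hn))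
  rw [h1, SB.card_target hn]
end

section
/- For n ≥ 1, Nₙ ~ 4ⁿ/(2n√(πn)) as n → ∞; that is, Nₙ · 2n^{3/2}√π / 4ⁿ → 1. In particular, Nₙ/4ⁿ is regularly varying with index −3/2. -/
open Filter Real Finset Polynomial
open scoped Nat

def Sfin (n : ℕ) : Finset (Finset ℕ) :=
  ((Finset.Icc 1 (2*n-1)).powersetCard n).filter (fun D => (∑ d ∈ D, d) % n = 0)

lemma N_eq (n : ℕ) : N n = (Sfin n).card := by
  rw [N, ← Nat.card_eq_finsetCard]
  apply Nat.card_congr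
  apply Equiv.subtypeEquivRight
  intro D
  simp [Sfin, Finset.mem_powersetCard, and_assoc]

lemma filter_lemma {n : ℕ} (hn : 0 < n) {ζ : ℂ} (hζ : IsPrimitiveRoot ζ n) (s : ℕ) :
    ∑ j ∈ range n, ζ^(j*s) = if s % n = 0 then (n : ℂ) else 0 := by
  have hsum : ∑ j ∈ range n, ζ^(j*s) = ∑ j ∈ range n, (ζ^s)^j := by
    refine Finset.sum_congr rfl fun j _ => ?_
    rw [← pow_mul, mul_comm]
  rw [hsum]
  by_cases h : s % n = 0
  · have : n ∣ s := Nat.dvd_of_mod_eq_zero h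
    have hz : ζ^s = 1 := hζ.pow_eq_one_iff_dvd s |>.mpr this
    simp [hz, h]
  · have hne : ζ^s ≠ 1 := by
      intro hc
      exact h (Nat.eq_zero_of_dvd_of_lt ((Nat.dvd_mod_iff dvd_rfl).mpr ((hζ.pow_eq_one_iff_dvd s).mp hc)) (Nat.mod_lt s hn))
    rw [geom_sum_eq hne, if_neg h]
    have : (ζ^s)^n = 1 := by rw [← pow_mul, mul_comm, pow_mul, hζ.pow_eq_one, one_pow]
    rw [this, sub_self, zero_div]

lemma key_identity {n : ℕ} (hn : 0 < n) {ζ : ℂ} (hζ : IsPrimitiveRoot ζ n) :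
    ((n : ℂ)) * (Sfin n).card
      = ∑ j ∈ range n, (∏ i ∈ Finset.Icc 1 (2*n-1), (X + C ((ζ^j)^i))).coeff (n-1) := by
  have hcard : (Finset.Icc 1 (2*n-1)).card = 2*n-1 := by
    rw [Nat.card_Icc]; omega
  have hk : n - 1 ≤ (Finset.Icc 1 (2*n-1)).card := by omega
  have hck : (Finset.Icc 1 (2*n-1)).card - (n-1) = n := by omega
  symm
  calc ∑ j ∈ range n, (∏ i ∈ Finset.Icc 1 (2*n-1), (X + C ((ζ^j)^i))).coeff (n-1)
      = ∑ j ∈ range n, ∑ t ∈ (Finset.Icc 1 (2*n-1)).powersetCard n, ∏ i ∈ t, (ζ^j)^i := by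
        refine Finset.sum_congr rfl fun j _ => ?_
        rw [Finset.prod_X_add_C_coeff _ _ hk, hck]
    _ = ∑ t ∈ (Finset.Icc 1 (2*n-1)).powersetCard n, ∑ j ∈ range n, ζ^(j * ∑ i ∈ t, i) := by
        rw [Finset.sum_comm]
        refine Finset.sum_congr rfl fun t _ => Finset.sum_congr rfl fun j _ => ?_
        rw [Finset.prod_pow_eq_pow_sum, ← pow_mul, mul_comm]
    _ = ∑ t ∈ (Finset.Icc 1 (2*n-1)).powersetCard n,
          (if (∑ i ∈ t, i) % n = 0 then (n:ℂ) else 0) := by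
        exact Finset.sum_congr rfl fun t _ => filter_lemma hn hζ _
    _ = (n : ℂ) * (Sfin n).card := by
        rw [← Finset.sum_filter, Finset.sum_const, nsmul_eq_mul, mul_comm]
        rfl

lemma prod_range_m {m : ℕ} (hm : 0 < m) {η : ℂ} (hη : IsPrimitiveRoot η m) :
    ∏ i ∈ range m, (X + C (η^i)) = X^m - C ((-1:ℂ)^m) := by
  have := X_pow_sub_C_eq_prod hη hm (α := (-1:ℂ)) rfl
  rw [this]
  refine Finset.prod_congr rfl fun i _ => ?_
  rw [mul_neg_one, map_neg, sub_neg_eq_add]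

lemma prod_range_mul {m g : ℕ} (hm : 0 < m) {η : ℂ} (hη : IsPrimitiveRoot η m) :
    ∏ i ∈ range (m*g), (X + C (η^i)) = (X^m - C ((-1:ℂ)^m))^g := by
  induction g with
  | zero => simp
  | succ g ih =>
    rw [Nat.mul_succ, Finset.prod_range_add, ih, pow_succ]
    congr 1
    rw [← prod_range_m hm hη]
    refine Finset.prod_congr rfl fun i _ => ?_
    rw [pow_add, pow_mul, hη.pow_eq_one, one_pow, one_mul]

lemma prod_full {n m g : ℕ} (hn : 0 < n) (hm : 0 < m) (hmg : n = m * g) {η : ℂ}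
    (hη : IsPrimitiveRoot η m) :
    (X + 1) * ∏ i ∈ Finset.Icc 1 (2*n-1), (X + C (η^i)) = ((X^m - C ((-1:ℂ)^m))^g)^2 := by
  have hη_n : η^n = 1 := by rw [hmg, pow_mul, hη.pow_eq_one, one_pow]
  have h2n : ∏ i ∈ range (2*n), (X + C (η^i)) = ((X^m - C ((-1:ℂ)^m))^g)^2 := by
    rw [two_mul, Finset.prod_range_add, sq]
    congr 1
    · rw [hmg, prod_range_mul hm hη]
    · rw [show (X ^ m - C ((-1:ℂ) ^ m)) ^ g = ∏ i ∈ range n, (X + C (η^i)) from hmg ▸ (prod_range_mul hm hη).symm]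
      refine Finset.prod_congr rfl fun i _ => ?_
      rw [pow_add, hη_n, one_mul]
  rw [← h2n]
  have : Finset.Icc 1 (2*n-1) = Finset.Ico 1 (2*n) := by
    rw [← Finset.Ico_add_one_right_eq_Icc]
    congr 1
    omega
  rw [this, Finset.range_eq_Ico, Finset.prod_eq_prod_Ico_succ_bot (by omega : 0 < 2*n)]
  simp

lemma coeff_bound_of_mul {P Q : Polynomial ℂ} (h : (X + 1) * P = Q) (k : ℕ) :
    ‖P.coeff k‖ ≤ ∑ t ∈ range (k+1), ‖Q.coeff t‖ := by
  have hc : ∀ t, Q.coeff t = (X*P).coeff t + P.coeff t := by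
    intro t; rw [← h, add_mul, one_mul, coeff_add]
  induction k with
  | zero =>
    have := hc 0
    rw [mul_coeff_zero, coeff_X_zero, zero_mul, zero_add] at this
    simp [this]
  | succ k ih =>
    have := hc (k+1)
    rw [coeff_X_mul] at this
    have hP : P.coeff (k+1) = Q.coeff (k+1) - P.coeff k := by rw [this]; ring
    rw [Finset.sum_range_succ, hP]
    calc ‖Q.coeff (k+1) - P.coeff k‖ ≤ ‖Q.coeff (k+1)‖ + ‖P.coeff k‖ := norm_sub_le _ _
    _ ≤ ‖Q.coeff (k+1)‖ + ∑ t ∈ range (k+1), ‖Q.coeff t‖ := by linarith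
    _ = ∑ t ∈ range (k+1), ‖Q.coeff t‖ + ‖Q.coeff (k+1)‖ := by ring

lemma Q_coeff_sum_bound (m g n : ℕ) :
    ∑ t ∈ range n, ‖(((X:Polynomial ℂ)^m - C ((-1:ℂ)^m))^(2*g)).coeff t‖ ≤ 2^(2*g) := by
  set e : ℂ := (-1:ℂ)^m with he
  have hexp : ((X:Polynomial ℂ)^m - C e)^(2*g)
      = ∑ k ∈ range (2*g+1), X^(m*k) * C ((-e)^(2*g-k) * (2*g).choose k) := by
    rw [sub_eq_add_neg, ← map_neg C, add_pow]
    refine Finset.sum_congr rfl fun k _ => ?_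
    rw [← pow_mul, map_mul, ← map_pow, map_natCast]
    ring
  have habs : ∀ t, ‖(((X:Polynomial ℂ)^m - C e)^(2*g)).coeff t‖
      ≤ ∑ k ∈ range (2*g+1), (if t = m*k then ((2*g).choose k : ℝ) else 0) := by
    intro t
    rw [hexp, finset_sum_coeff]
    refine (norm_sum_le _ _).trans (Finset.sum_le_sum fun k _ => ?_)
    rw [coeff_mul_C, coeff_X_pow]
    rcases eq_or_ne t (m*k) with h | h
    · simp only [if_pos h, one_mul]
      rw [norm_mul, norm_pow, norm_neg]
      have : ‖e‖ = 1 := by rw [he, norm_pow, norm_neg, norm_one, one_pow]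
      rw [this, one_pow, one_mul, Complex.norm_natCast]
    · simp [if_neg h, if_neg (Ne.symm h)]
  calc ∑ t ∈ range n, ‖(((X:Polynomial ℂ)^m - C e)^(2*g)).coeff t‖
      ≤ ∑ t ∈ range n, ∑ k ∈ range (2*g+1), (if t = m*k then ((2*g).choose k : ℝ) else 0) :=
        Finset.sum_le_sum fun t _ => habs t
    _ = ∑ k ∈ range (2*g+1), ∑ t ∈ range n, (if t = m*k then ((2*g).choose k : ℝ) else 0) :=
        Finset.sum_comm
    _ ≤ ∑ k ∈ range (2*g+1), ((2*g).choose k : ℝ) := by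
        refine Finset.sum_le_sum fun k _ => ?_
        rw [Finset.sum_ite_eq' (range n) (m*k) (fun _ => ((2*g).choose k : ℝ))]
        split <;> simp
    _ = 2^(2*g) := by
        rw [← Nat.cast_sum]
        norm_cast
        exact Nat.sum_range_choose (2*g)

set_option maxHeartbeats 2000000 in
lemma key_bound {n : ℕ} (hn : 0 < n) :
    |(n:ℝ) * (N n) - ((2*n-1).choose (n-1))| ≤ n * 2^n := by
  obtain ⟨ζ, hζ⟩ : ∃ ζ : ℂ, IsPrimitiveRoot ζ n := ⟨_, Complex.isPrimitiveRoot_exp n hn.ne'⟩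
  have hid := key_identity hn hζ
  rw [← N_eq] at hid
  -- split off j = 0
  rw [Finset.range_eq_Ico, Finset.sum_eq_sum_Ico_succ_bot hn] at hid
  have h0 : (∏ i ∈ Finset.Icc 1 (2*n-1), (X + C ((ζ^0)^(i:ℕ)))).coeff (n-1)
      = ((2*n-1).choose (n-1) : ℂ) := by
    simp only [pow_zero, one_pow, map_one]
    rw [Finset.prod_const, Nat.card_Icc]
    have : 2*n - 1 + 1 - 1 = 2*n-1 := by omega
    rw [this, coeff_X_add_one_pow]
  rw [h0] at hid
  -- bound each remaining term
  have hterm : ∀ j ∈ Finset.Ico 1 n,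
      ‖(∏ i ∈ Finset.Icc 1 (2*n-1), (X + C ((ζ^j)^(i:ℕ)))).coeff (n-1)‖ ≤ (2:ℝ)^n := by
    intro j hj
    rw [Finset.mem_Ico] at hj
    set g := Nat.gcd n j with hgdef
    have hgdvd : g ∣ n := Nat.gcd_dvd_left n j
    have hgpos : 0 < g := Nat.gcd_pos_of_pos_left _ hn
    have hglt : g < n := lt_of_le_of_lt (Nat.le_of_dvd (by omega) (Nat.gcd_dvd_right n j)) hj.2
    set m := n / g with hmdef
    have hmg : n = m * g := (Nat.div_mul_cancel hgdvd).symm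
    have hm : 0 < m := Nat.div_pos (Nat.le_of_dvd hn hgdvd) hgpos
    have h2g : 2*g ≤ n := by
      have : 2 ≤ m := by
        rcases Nat.lt_or_ge m 2 with h | h
        · interval_cases m <;> omega
        · exact h
      calc 2*g ≤ m*g := Nat.mul_le_mul_right g this
      _ = n := hmg.symm
    have hη : IsPrimitiveRoot (ζ^j) m := by
      have horder : orderOf ζ = n := hζ.eq_orderOf.symm
      have := IsPrimitiveRoot.orderOf (ζ^j)
      rwa [orderOf_pow' ζ (by omega : j ≠ 0), horder, ← hgdef, ← hmdef] at this
    have hfull := prod_full hn hm hmg hη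
    rw [← pow_mul, mul_comm g 2] at hfull
    have hb := coeff_bound_of_mul hfull (n-1)
    have : n - 1 + 1 = n := by omega
    rw [this] at hb
    refine hb.trans ((Q_coeff_sum_bound m g n).trans ?_)
    have : (2:ℝ)^(2*g) ≤ (2:ℝ)^n := by
      apply pow_le_pow_right₀ (by norm_num) h2g
    exact this
  -- assemble
  have hsub : (↑n * (N n : ℂ) - ((2*n-1).choose (n-1) : ℂ))
      = ∑ j ∈ Finset.Ico 1 n, (∏ i ∈ Finset.Icc 1 (2*n-1), (X + C ((ζ^j)^(i:ℕ)))).coeff (n-1) := by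
    exact sub_eq_iff_eq_add'.mpr hid
  have hnorm : ‖↑n * (N n : ℂ) - ((2*n-1).choose (n-1) : ℂ)‖ ≤ (n:ℝ) * 2^n := by
    rw [hsub]
    refine le_trans (norm_sum_le _ _) (le_trans (Finset.sum_le_sum hterm) ?_)
    rw [Finset.sum_const, Nat.card_Ico, nsmul_eq_mul]
    have h1 : ((n-1:ℕ):ℝ) ≤ (n:ℝ) := by exact_mod_cast Nat.sub_le n 1
    nlinarith [pow_pos (by norm_num : (0:ℝ) < 2) n]

  have : ((↑n * (N n : ℝ) - ((2*n-1).choose (n-1) : ℝ) : ℝ) : ℂ)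
      = ↑n * (N n : ℂ) - ((2*n-1).choose (n-1) : ℂ) := by push_cast; ring
  rw [← Real.norm_eq_abs, ← Complex.norm_real, this]
  exact hnorm

lemma stirling_ratio {n : ℕ} (hn : 0 < n) :
    Stirling.stirlingSeq (2*n) / (Stirling.stirlingSeq n)^2
      = (Nat.centralBinom n : ℝ) * Real.sqrt n / 4^n := by
  have hnR : (0:ℝ) < n := by exact_mod_cast hn
  have hfac : (0:ℝ) < (n ! : ℝ) := by exact_mod_cast Nat.factorial_pos n
  have hexp : (0:ℝ) < Real.exp 1 := Real.exp_pos 1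
  have hsqn : (0:ℝ) < Real.sqrt n := Real.sqrt_pos.mpr hnR
  have hpow : (0:ℝ) < ((n:ℝ)/Real.exp 1)^n := pow_pos (by positivity) n
  have hle : n ≤ 2*n := by omega
  have hfact2 : ((2*n)! : ℝ) = (Nat.centralBinom n : ℝ) * (n ! : ℝ) * (n ! : ℝ) := by
    have h := Nat.choose_mul_factorial_mul_factorial hle
    rw [show 2*n-n = n from by omega] at h
    rw [Nat.centralBinom]
    exact_mod_cast h.symm
  have h2n : ((2*n : ℕ) : ℝ) = 2*(n:ℝ) := by push_cast; ring
  have h4n : Real.sqrt (2*((2*n:ℕ):ℝ)) = 2 * Real.sqrt n := by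
    rw [h2n, show (2:ℝ)*(2*(n:ℝ)) = 4 * n by ring, Real.sqrt_mul (by norm_num : (0:ℝ) ≤ 4),
      show Real.sqrt 4 = 2 by
        rw [show (4:ℝ) = 2^2 by norm_num, Real.sqrt_sq (by norm_num : (0:ℝ) ≤ 2)]]
  have hpow2 : (((2*n:ℕ):ℝ)/Real.exp 1)^(2*n) = 4^n * ((n:ℝ)/Real.exp 1)^(2*n) := by
    rw [h2n, show (2:ℝ)*(n:ℝ)/Real.exp 1 = 2 * ((n:ℝ)/Real.exp 1) by ring, mul_pow,
      pow_mul, show (2:ℝ)^2 = 4 by norm_num]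
  have hsq2n : Real.sqrt (2*(n:ℝ)) ^ 2 = 2*(n:ℝ) := Real.sq_sqrt (by linarith)
  have hsq2npos : (0:ℝ) < Real.sqrt (2*(n:ℝ)) := Real.sqrt_pos.mpr (by linarith)
  rw [Stirling.stirlingSeq, Stirling.stirlingSeq, hfact2, h4n, hpow2]
  have hE : ((n:ℝ)/Real.exp 1)^(2*n) = (((n:ℝ)/Real.exp 1)^n)^2 := by
    rw [← pow_mul, mul_comm]
  rw [hE]
  have h4pos : (0:ℝ) < 4^n := by positivity
  field_simp
  ring_nf
  rw [Real.sq_sqrt (by positivity : (0:ℝ) ≤ n * 2), Real.sq_sqrt (by positivity : (0:ℝ) ≤ n)]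
  ring

lemma centralBinom_tendsto :
    Tendsto (fun n : ℕ => (Nat.centralBinom n : ℝ) * Real.sqrt π * Real.sqrt n / 4^n)
      atTop (nhds 1) := by
  have hπ : (0:ℝ) < π := Real.pi_pos
  have hsπ : Real.sqrt π ≠ 0 := by positivity
  have h1 : Tendsto (fun n : ℕ => Stirling.stirlingSeq (2*n)) atTop (nhds (Real.sqrt π)) :=
    Stirling.tendsto_stirlingSeq_sqrt_pi.comp (tendsto_id.const_mul_atTop' two_pos)
  have h2 : Tendsto (fun n : ℕ => (Stirling.stirlingSeq n)^2) atTop (nhds ((Real.sqrt π)^2)) :=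
    Stirling.tendsto_stirlingSeq_sqrt_pi.pow 2
  have hratio : Tendsto (fun n : ℕ => Stirling.stirlingSeq (2*n) / (Stirling.stirlingSeq n)^2)
      atTop (nhds (Real.sqrt π / (Real.sqrt π)^2)) :=
    h1.div h2 (pow_ne_zero 2 hsπ)
  have hval : Real.sqrt π * (Real.sqrt π / (Real.sqrt π)^2) = 1 := by
    field_simp
  have := hratio.const_mul (Real.sqrt π)
  rw [hval] at this
  refine this.congr' ?_
  filter_upwards [eventually_gt_atTop 0] with n hn
  rw [stirling_ratio hn]
  ring

lemma centralBinom_eq {n : ℕ} (hn : 0 < n) :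
    Nat.centralBinom n = 2 * (2*n-1).choose (n-1) := by
  obtain ⟨k, rfl⟩ : ∃ k, n = k+1 := ⟨n-1, by omega⟩
  rw [Nat.centralBinom, show 2*(k+1) = (2*k+1)+1 by ring, Nat.choose_succ_succ]
  simp only [Nat.add_sub_cancel, Nat.succ_eq_add_one]
  have h3 : (2*k+1).choose (k+1) = (2*k+1).choose k := by
    have := Nat.choose_symm (show k+1 ≤ 2*k+1 by omega)
    rw [show 2*k+1-(k+1) = k by omega] at this
    exact this.symm
  rw [h3]; ring

/-- `Nₙ ∼ 4ⁿ/(2n√(πn))` as `n → ∞`; that is, `Nₙ · 2n^{3/2}·√π / 4ⁿ → 1`. -/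
theorem EGZ_number_asymptotics :
    Tendsto (fun n : ℕ => (N n : ℝ) * 2 * (n : ℝ) ^ (3 / 2 : ℝ) * Real.sqrt π / 4 ^ n)
      atTop (nhds 1) := by
  set f : ℕ → ℝ := fun n => (N n : ℝ) * 2 * (n : ℝ) ^ (3 / 2 : ℝ) * Real.sqrt π / 4 ^ n with hf
  set g : ℕ → ℝ := fun n => (Nat.centralBinom n : ℝ) * Real.sqrt π * Real.sqrt n / 4^n with hg
  have hdiff : Tendsto (fun n => f n - g n) atTop (nhds 0) := by
    apply squeeze_zero_norm' (a := fun n : ℕ => (2*Real.sqrt π) * ((n:ℝ)^2 / 2^n))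
    · filter_upwards [eventually_ge_atTop 1] with n hn
      have hnpos : (0:ℝ) < n := by exact_mod_cast hn
      have hrpow : (n:ℝ)^(3/2:ℝ) = n * Real.sqrt n := by
        rw [show (3/2:ℝ) = 1 + 1/2 by norm_num, Real.rpow_add hnpos, Real.rpow_one,
          ← Real.sqrt_eq_rpow]
      have hCB : (Nat.centralBinom n : ℝ) = 2 * ((2*n-1).choose (n-1) : ℝ) := by
        exact_mod_cast congrArg (Nat.cast : ℕ → ℝ) (centralBinom_eq hn)
      have h4 : (4:ℝ)^n = 2^n * 2^n := by
        rw [← mul_pow]; norm_num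
      have hkey := key_bound hn
      have hfg : f n - g n
          = ((n:ℝ) * (N n) - ((2*n-1).choose (n-1) : ℝ)) * (2 * Real.sqrt π * Real.sqrt n / 4^n) := by
        rw [hf, hg]
        simp only
        rw [hrpow, hCB]
        ring
      rw [hfg]
      rw [norm_mul]
      have hb2 : ‖2 * Real.sqrt π * Real.sqrt n / 4^n‖ = 2 * Real.sqrt π * Real.sqrt n / 4^n := by
        rw [Real.norm_eq_abs, abs_of_nonneg]; positivity
      rw [Real.norm_eq_abs, hb2]
      calc |(n:ℝ) * (N n) - ((2*n-1).choose (n-1) : ℝ)| * (2 * Real.sqrt π * Real.sqrt n / 4^n)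
          ≤ ((n:ℝ) * 2^n) * (2 * Real.sqrt π * Real.sqrt n / 4^n) := by
            apply mul_le_mul_of_nonneg_right hkey; positivity
        _ = (2*Real.sqrt π) * ((n * Real.sqrt n) / 2^n) := by
            rw [h4]; field_simp
        _ ≤ (2*Real.sqrt π) * ((n:ℝ)^2 / 2^n) := by
            apply mul_le_mul_of_nonneg_left _ (by positivity)
            apply div_le_div_of_nonneg_right ?_ (by positivity)
            have hs : Real.sqrt n ≤ (n:ℝ) :=
              (Real.sqrt_le_sqrt (by nlinarith [show (1:ℝ) ≤ (n:ℝ) from by exact_mod_cast hn] : (n:ℝ) ≤ (n:ℝ)^2)).trans_eq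
                (Real.sqrt_sq hnpos.le)
            rw [sq]
            exact mul_le_mul_of_nonneg_left hs hnpos.le
    · have := (tendsto_pow_const_div_const_pow_of_one_lt 2 (by norm_num : (1:ℝ) < 2)).const_mul
        (2*Real.sqrt π)
      simpa using this
  have := centralBinom_tendsto.add hdiff
  rw [add_zero] at this
  refine this.congr fun n => by rw [hg, hf]; simp only; ring
end
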